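/- arXiv:1908.11308 — 6 statements merged into one kernel-verified Lean document; each statement's English description precedes it below -/
import Mathlib

section
/- For a connected undirected graph G on n ≥ 2 vertices, the inequality ∑_{i=2}^n 1/λᵢ ≥ (n-1)²/(n·d̃) holds with equality if and only if G is the complete graph Kₙ. -/
/-! The nonzero Laplacian eigenvalues of a connected graph are `n - 1` positive reals with sum
`tr L = n·d̃`, so the inequality is the harmonic–arithmetic mean inequality, with equality iff
they all equal one `c`, i.e. iff `L * L = c • L`. Off the diagonal, `L * L = c • L` says that two
distinct non-adjacent vertices have no common neighbour, which forces a connected graph to be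
complete; conversely `L * L = n • L` for `Kₙ`. -/

open Finset Matrix Filter

/-- Eigenvalues (unordered) of the unweighted Laplacian of `G`. -/
noncomputable def lapEigs {n : ℕ} (G : SimpleGraph (Fin n)) : Fin n → ℝ :=
  letI := Classical.decRel G.Adj
  (SimpleGraph.posSemidef_lapMatrix ℝ G).isHermitian.eigenvalues

/-- Eigenvalues of the Laplacian sorted in increasing order:
`sortedLapEigs G 0 = λ₁ ≤ sortedLapEigs G 1 = λ₂ ≤ ...`. -/
noncomputable def sortedLapEigs {n : ℕ} (G : SimpleGraph (Fin n)) : Fin n → ℝ :=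
  lapEigs G ∘ Tuple.sort (lapEigs G)

/-- Structural vulnerability `H*(G) = (1/(2n)) ∑_{i=2}^n 1/λᵢ`. Since `(0:ℝ)⁻¹ = 0` in Lean,
summing `(λᵢ)⁻¹` over all eigenvalues skips the single zero eigenvalue of a connected graph. -/
noncomputable def Hstar {n : ℕ} (G : SimpleGraph (Fin n)) : ℝ :=
  (1 / (2 * n)) * ∑ i, (lapEigs G i)⁻¹

/-- Kirchhoff index `K_f(G) = n ∑_{i=2}^n 1/λᵢ` (spectral formula, valid for connected graphs). -/
noncomputable def Kf {n : ℕ} (G : SimpleGraph (Fin n)) : ℝ :=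
  (n : ℝ) * ∑ i, (lapEigs G i)⁻¹

/-- Average degree `d̃(G) = (∑ᵥ dᵥ)/n = 2|E|/n`. -/
noncomputable def avgDeg {V : Type*} [Fintype V] (G : SimpleGraph V) : ℝ :=
  letI := Classical.decRel G.Adj
  (∑ v, (G.degree v : ℝ)) / Fintype.card V

/-- Sum of pairwise shortest-path distances `∑_{i<j} δ_{ij}`. -/
noncomputable def distSum {n : ℕ} (G : SimpleGraph (Fin n)) : ℝ :=
  ∑ p ∈ Finset.univ.filter (fun p : Fin n × Fin n => p.1 < p.2), (G.dist p.1 p.2 : ℝ)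

/-- Average pairwise distance `δ̃(G) = (2/(n²-n)) ∑_{i<j} δ_{ij}`. -/
noncomputable def avgDist {n : ℕ} (G : SimpleGraph (Fin n)) : ℝ :=
  (2 / ((n : ℝ)^2 - n)) * distSum G

/-- The star graph on `Fin n`: vertex `0` is adjacent to every other vertex. -/
noncomputable def starGraph (n : ℕ) : SimpleGraph (Fin n) :=
  SimpleGraph.fromRel (fun i _ => i.val = 0)

theorem Finset.sum_inv_eq_sq_card_div_sum_iff {ι : Type*} {s : Finset ι} {x : ι → ℝ}
    (hx : ∀ i ∈ s, 0 < x i) :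
    ∑ i ∈ s, (x i)⁻¹ = (#s : ℝ) ^ 2 / ∑ i ∈ s, x i ↔ ∃ c, ∀ i ∈ s, x i = c := by
  constructor
  · intro h
    rcases s.eq_empty_or_nonempty with rfl | hs
    · exact ⟨0, by simp⟩
    set c := (∑ i ∈ s, x i) / #s
    have hc : 0 < c := by have := hs.card_pos; have := sum_pos hx hs; positivity
    -- the harmonic–arithmetic mean defect is a sum of squares
    have hsq : ∑ i ∈ s, (x i - c) ^ 2 / (x i * c ^ 2) = 0 := by
      have hk : (#s : ℝ) ≠ 0 := by have := hs.card_pos; positivity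
      have hT : ∑ i ∈ s, x i ≠ 0 := (sum_pos hx hs).ne'
      calc ∑ i ∈ s, (x i - c) ^ 2 / (x i * c ^ 2)
          = ∑ i ∈ s, ((x i)⁻¹ - 2 / c + x i / c ^ 2) :=
            sum_congr rfl fun i hi => by have := (hx i hi).ne'; field_simp; ring
        _ = 0 := by
          rw [sum_add_distrib, sum_sub_distrib, sum_const, ← sum_div, h, nsmul_eq_mul]
          simp only [c]; field_simp; ring
    refine ⟨c, fun i hi => ?_⟩
    have hnonneg : ∀ j ∈ s, 0 ≤ (x j - c) ^ 2 / (x j * c ^ 2) :=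
      fun j hj => by have := hx j hj; positivity
    have hzero := (sum_eq_zero_iff_of_nonneg hnonneg).mp hsq i hi
    have hne : x i * c ^ 2 ≠ 0 := by have := hx i hi; positivity
    rwa [div_eq_zero_iff, or_iff_left hne, sq_eq_zero_iff, sub_eq_zero] at hzero
  · rintro ⟨c, hc⟩
    rw [sum_congr rfl fun i hi => by rw [hc i hi], sum_congr rfl hc]
    simp only [sum_const, nsmul_eq_mul]
    rcases s.eq_empty_or_nonempty with rfl | hs
    · simp
    have : (#s : ℝ) ≠ 0 := by have := hs.card_pos; positivity
    field_simp

theorem Matrix.IsHermitian.mul_self_eq_smul_iff {𝕜 n : Type*} [RCLike 𝕜] [Fintype n]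
    [DecidableEq n] {A : Matrix n n 𝕜} (hA : A.IsHermitian) (c : ℝ) :
    A * A = c • A ↔ ∀ i, hA.eigenvalues i * hA.eigenvalues i = c * hA.eigenvalues i := by
  set φ := Unitary.conjStarAlgAut 𝕜 _ hA.eigenvectorUnitary
  set D := diagonal (RCLike.ofReal ∘ hA.eigenvalues : n → 𝕜)
  have hAD : A = φ D := hA.spectral_theorem
  rw [RCLike.real_smul_eq_coe_smul (K := 𝕜), show A * A = φ (D * D) by rw [map_mul, ← hAD],
    show (c : 𝕜) • A = φ ((c : 𝕜) • D) by rw [map_smul, ← hAD], (EquivLike.injective φ).eq_iff,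
    diagonal_mul_diagonal, ← diagonal_smul, diagonal_eq_diagonal_iff]
  simp only [Function.comp_apply, Pi.smul_apply, smul_eq_mul]
  exact forall_congr' fun i => by norm_cast

namespace SimpleGraph

theorem Connected.eq_top_of_adj_adj {V : Type*} {G : SimpleGraph V} (hG : G.Connected)
    (h : ∀ u v w, G.Adj u v → G.Adj v w → u ≠ w → G.Adj u w) : G = ⊤ := by
  have hwalk : ∀ {u w} (p : G.Walk u w), u = w ∨ G.Adj u w := by
    intro u w p
    induction p with
    | nil => exact .inl rfl
    | cons huv _ ih =>
      rcases ih with rfl | hvw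
      · exact .inr huv
      · exact (em _).imp_right (h _ _ _ huv hvw)
  refine top_unique fun u w huw => ?_
  exact (hwalk (hG u w).some).resolve_left huw

variable {R V : Type*} [Fintype V] [DecidableEq V] (G : SimpleGraph V) [DecidableRel G.Adj]

theorem lapMatrix_apply_of_ne [AddGroupWithOne R] {u w : V} (h : u ≠ w) :
    G.lapMatrix R u w = -(G.adjMatrix R u w) := by
  simp [lapMatrix, degMatrix, diagonal_apply_ne _ h]

theorem trace_lapMatrix [AddCommGroupWithOne R] :
    (G.lapMatrix R).trace = ∑ v, (G.degree v : R) := by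
  simp [trace, lapMatrix, degMatrix]

theorem adj_of_lapMatrix_mul_self_eq_smul [Ring R] [LinearOrder R] [IsStrictOrderedRing R]
    {c : R} (h : G.lapMatrix R * G.lapMatrix R = c • G.lapMatrix R) {u v w : V}
    (huv : G.Adj u v) (hvw : G.Adj v w) (huw : u ≠ w) : G.Adj u w := by
  by_contra hnadj
  have hLuw : G.lapMatrix R u w = 0 := by simp [lapMatrix_apply_of_ne G huw, hnadj]
  -- off the diagonal `L = -A`, so `(L * L) u w` counts common neighbours of `u` and `w`
  have hterm : ∀ x, 0 ≤ G.lapMatrix R u x * G.lapMatrix R x w := by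
    intro x
    rcases eq_or_ne x u with rfl | hxu
    · simp [hLuw]
    rcases eq_or_ne x w with rfl | hxw
    · simp [hLuw]
    rw [lapMatrix_apply_of_ne G hxu.symm, lapMatrix_apply_of_ne G hxw, neg_mul_neg,
      adjMatrix_apply, adjMatrix_apply]
    split_ifs <;> simp
  have hsum : ∑ x, G.lapMatrix R u x * G.lapMatrix R x w = 0 := by
    rw [← mul_apply, h, Matrix.smul_apply, hLuw, smul_zero]
  have := (sum_eq_zero_iff_of_nonneg fun x _ => hterm x).mp hsum v (mem_univ v)
  simp [lapMatrix_apply_of_ne G huv.ne, lapMatrix_apply_of_ne G hvw.ne, huv, hvw] at this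

theorem lapMatrix_top_apply [AddGroupWithOne R] [DecidableRel (⊤ : SimpleGraph V).Adj]
    (u w : V) :
    (⊤ : SimpleGraph V).lapMatrix R u w = (if u = w then (Fintype.card V : R) else 0) - 1 := by
  rcases eq_or_ne u w with rfl | h
  · have : 1 ≤ Fintype.card V := Fintype.card_pos_iff.mpr ⟨u⟩
    have hdeg : (⊤ : SimpleGraph V).degree u = Fintype.card V - 1 := by
      convert complete_graph_degree u
    simp [lapMatrix, degMatrix, hdeg, Nat.cast_sub this]
  · simp [lapMatrix_apply_of_ne _ h, h]

theorem lapMatrix_top_mul_self [Ring R] [DecidableRel (⊤ : SimpleGraph V).Adj] :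
    (⊤ : SimpleGraph V).lapMatrix R * (⊤ : SimpleGraph V).lapMatrix R =
      (Fintype.card V : R) • (⊤ : SimpleGraph V).lapMatrix R := by
  ext u w
  simp only [mul_apply, Matrix.smul_apply, smul_eq_mul, lapMatrix_top_apply]
  simp only [sub_mul, mul_sub, ite_mul, mul_ite, zero_mul, mul_zero, one_mul, mul_one,
    sum_sub_distrib, sum_ite_eq, sum_ite_eq', mem_univ, if_true, sum_const, card_univ,
    nsmul_eq_mul]
  split_ifs <;> abel

theorem Connected.card_eigenvalues_lapMatrix_ne_zero {G : SimpleGraph V} [DecidableRel G.Adj]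
    (hG : G.Connected) (hL : (G.lapMatrix ℝ).IsHermitian) :
    Fintype.card {i // hL.eigenvalues i ≠ 0} = Fintype.card V - 1 := by
  have hcc : Fintype.card G.ConnectedComponent = 1 := by
    have : Nonempty G.ConnectedComponent := hG.nonempty.map G.connectedComponentMk
    exact le_antisymm (Fintype.card_le_one_iff_subsingleton.mpr
      hG.preconnected.subsingleton_connectedComponent) Fintype.card_pos
  have hrank := LinearMap.finrank_range_add_finrank_ker (G.lapMatrix ℝ).mulVecLin
  rw [← rank, hL.rank_eq_card_non_zero_eigs, Module.finrank_fintype_fun_eq_card] at hrank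
  rw [card_connectedComponent_eq_finrank_ker_toLin'_lapMatrix, Matrix.toLin'_apply'] at hcc
  rw [hcc] at hrank
  omega

end SimpleGraph

theorem stmt_1_general {n : ℕ} (G : SimpleGraph (Fin n)) (hG : G.Connected) :
    (∑ i, (lapEigs G i)⁻¹ = ((n : ℝ) - 1)^2 / ((n : ℝ) * avgDeg G)) ↔
      G = (⊤ : SimpleGraph (Fin n)) := by
  let _ : DecidableRel G.Adj := Classical.decRel G.Adj
  have hn : 0 < n := Fin.pos_iff_nonempty.mpr hG.nonempty
  have hL := SimpleGraph.posSemidef_lapMatrix ℝ G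
  have hH : (G.lapMatrix ℝ).IsHermitian := hL.isHermitian
  have hμ : lapEigs G = hH.eigenvalues := rfl
  set S := univ.filter fun i => hH.eigenvalues i ≠ 0
  have hpos : ∀ i ∈ S, 0 < hH.eigenvalues i := fun i hi =>
    (hL.eigenvalues_nonneg i).lt_of_ne' (mem_filter.mp hi).2
  have hinv : ∑ i, (hH.eigenvalues i)⁻¹ = ∑ i ∈ S, (hH.eigenvalues i)⁻¹ :=
    (sum_filter_of_ne fun i _ h => by simpa using h).symm
  have htrace : (n : ℝ) * avgDeg G = ∑ i ∈ S, hH.eigenvalues i := by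
    rw [sum_filter_ne_zero, avgDeg, Fintype.card_fin, mul_div_cancel₀ _ (by positivity),
      ← SimpleGraph.trace_lapMatrix, hH.trace_eq_sum_eigenvalues]
    simp
  have hcard : (#S : ℝ) = n - 1 := by
    rw [← Fintype.card_subtype, hG.card_eigenvalues_lapMatrix_ne_zero, Fintype.card_fin,
      Nat.cast_pred hn]
  rw [hμ, hinv, htrace, ← hcard, sum_inv_eq_sq_card_div_sum_iff hpos]
  constructor
  · rintro ⟨c, hc⟩
    refine hG.eq_top_of_adj_adj fun u v w =>
      SimpleGraph.adj_of_lapMatrix_mul_self_eq_smul G (c := c) ?_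
    refine (hH.mul_self_eq_smul_iff c).mpr fun i => ?_
    by_cases hi : hH.eigenvalues i = 0
    · simp [hi]
    · rw [hc i (mem_filter.mpr ⟨mem_univ i, hi⟩), mul_comm]
  · rintro rfl
    have hsq := (hH.mul_self_eq_smul_iff n).mp (by
      simpa using SimpleGraph.lapMatrix_top_mul_self (V := Fin n) (R := ℝ))
    exact ⟨n, fun i hi => mul_right_cancel₀ (mem_filter.mp hi).2 (hsq i)⟩

/-- the bound `∑_{i=2}^n 1/λᵢ ≥ (n-1)²/(n·d̃)` holds with equality
iff `G` is the complete graph. -/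
theorem stmt_1 {n : ℕ} (hn : 2 ≤ n) (G : SimpleGraph (Fin n)) (hG : G.Connected) :
    (∑ i, (lapEigs G i)⁻¹ = ((n : ℝ) - 1)^2 / ((n : ℝ) * avgDeg G)) ↔
      G = (⊤ : SimpleGraph (Fin n)) :=
  stmt_1_general G hG
end

section
/- For any connected weighted undirected graph with edge weights w satisfying 0 < w ≤ 1 (componentwise), each eigenvalue of the weighted Laplacian L_w is at most the corresponding eigenvalue of the unweighted Laplacian L; consequently ∑_{i=2}^n 1/λᵢ(L_w) ≥ ∑_{i=2}^n 1/λᵢ(L), so the minimum of H(G,w) = (1/2n)∑_{i=2}^n 1/λᵢ(L_w) over 0 < w ≤ 1 is attained at w = 1. -/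
/-!
Courant–Fischer: if `c • A ≤ B` as quadratic forms (`c ≥ 0`), then `c λₖ(A) ≤ λₖ(B)` for the
increasingly sorted eigenvalues. The `n - 1` linear conditions "orthogonal to the eigenvectors
of `A` below `k` and to those of `B` above `k`" leave a nonzero `x`, whose Rayleigh quotient
lies above `λₖ(A)` for `A` and below `λₖ(B)` for `B`.

The quadratic form of `L_w` is `½ ∑_{i ~ j} w_ij (x_i - x_j)²`, so `c L ≤ L_w ≤ L` with `c`
the least edge weight. Hence `λₖ(L_w) ≤ λₖ(L)`, and `λₖ(L_w) > 0` whenever `λₖ(L) > 0`;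
this gives `λₖ(L)⁻¹ ≤ λₖ(L_w)⁻¹` termwise, also where `λₖ(L) = 0` thanks to `0⁻¹ = 0`.
-/

open Finset Matrix Filter

open Classical in
/-- The weighted Laplacian `L_w` of `G` with edge weights `w`. -/
noncomputable def wLap {n : ℕ} (G : SimpleGraph (Fin n)) (w : Fin n → Fin n → ℝ) :
    Matrix (Fin n) (Fin n) ℝ :=
  Matrix.of fun i j =>
    if i = j then ∑ k, (if G.Adj i k then w i k else 0)
    else if G.Adj i j then -(w i j) else 0

lemma exists_ne_zero_forall_dotProduct_eq_zero {K ι m : Type*} [Field K] [Fintype ι]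
    [Fintype m] (hcard : Fintype.card ι < Fintype.card m) (v : ι → m → K) :
    ∃ x : m → K, x ≠ 0 ∧ ∀ i, v i ⬝ᵥ x = 0 := by
  have hker : LinearMap.ker (Matrix.of v).mulVecLin ≠ ⊥ :=
    LinearMap.ker_ne_bot_of_finrank_lt (by simpa using hcard)
  obtain ⟨x, hx, hx0⟩ := Submodule.exists_mem_ne_zero_of_ne_bot hker
  exact ⟨x, hx0, fun i => congrFun hx i⟩

namespace Matrix.IsHermitian

section Rayleigh

variable {m : Type*} [Fintype m] [DecidableEq m] {A : Matrix m m ℝ} (hA : A.IsHermitian)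

lemma sum_eigenvectorBasis_dotProduct_mul (x y : m → ℝ) :
    ∑ i, (⇑(hA.eigenvectorBasis i) ⬝ᵥ x) * (⇑(hA.eigenvectorBasis i) ⬝ᵥ y) = x ⬝ᵥ y := by
  simpa [EuclideanSpace.inner_eq_star_dotProduct, dotProduct_comm] using
    hA.eigenvectorBasis.sum_inner_mul_inner (WithLp.toLp 2 x) (WithLp.toLp 2 y)

lemma eigenvectorBasis_dotProduct_mulVec (x : m → ℝ) (i : m) :
    ⇑(hA.eigenvectorBasis i) ⬝ᵥ A *ᵥ x
      = hA.eigenvalues i * (⇑(hA.eigenvectorBasis i) ⬝ᵥ x) := by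
  rw [dotProduct_mulVec, ← mulVec_transpose, ← conjTranspose_eq_transpose_of_trivial, hA.eq,
    mulVec_eigenvectorBasis, smul_dotProduct, smul_eq_mul]

lemma dotProduct_mulVec_eq_sum_eigenvalues_mul_sq (x : m → ℝ) :
    x ⬝ᵥ A *ᵥ x = ∑ i, hA.eigenvalues i * (⇑(hA.eigenvectorBasis i) ⬝ᵥ x) ^ 2 := by
  rw [← hA.sum_eigenvectorBasis_dotProduct_mul]
  exact sum_congr rfl fun i _ => by rw [eigenvectorBasis_dotProduct_mulVec]; ring

lemma mul_dotProduct_self_le_dotProduct_mulVec {μ : ℝ} {x : m → ℝ}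
    (hx : ∀ i, hA.eigenvalues i < μ → ⇑(hA.eigenvectorBasis i) ⬝ᵥ x = 0) :
    μ * (x ⬝ᵥ x) ≤ x ⬝ᵥ A *ᵥ x := by
  rw [hA.dotProduct_mulVec_eq_sum_eigenvalues_mul_sq, ← hA.sum_eigenvectorBasis_dotProduct_mul,
    mul_sum]
  refine sum_le_sum fun i _ => ?_
  rcases lt_or_ge (hA.eigenvalues i) μ with h | h
  · simp [hx i h]
  · rw [← sq]; exact mul_le_mul_of_nonneg_right h (sq_nonneg _)

lemma dotProduct_mulVec_le_mul_dotProduct_self {μ : ℝ} {x : m → ℝ}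
    (hx : ∀ i, μ < hA.eigenvalues i → ⇑(hA.eigenvectorBasis i) ⬝ᵥ x = 0) :
    x ⬝ᵥ A *ᵥ x ≤ μ * (x ⬝ᵥ x) := by
  rw [hA.dotProduct_mulVec_eq_sum_eigenvalues_mul_sq, ← hA.sum_eigenvectorBasis_dotProduct_mul,
    mul_sum]
  refine sum_le_sum fun i _ => ?_
  rcases lt_or_ge μ (hA.eigenvalues i) with h | h
  · simp [hx i h]
  · rw [← sq]; exact mul_le_mul_of_nonneg_right h (sq_nonneg _)

end Rayleigh

variable {n : ℕ} {A B : Matrix (Fin n) (Fin n) ℝ}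

noncomputable def sortedEigenvalues (hA : A.IsHermitian) : Fin n → ℝ :=
  hA.eigenvalues ∘ Tuple.sort hA.eigenvalues

lemma monotone_sortedEigenvalues (hA : A.IsHermitian) : Monotone hA.sortedEigenvalues :=
  Tuple.monotone_sort hA.eigenvalues

lemma mul_sortedEigenvalues_le (hA : A.IsHermitian) (hB : B.IsHermitian) {c : ℝ} (hc : 0 ≤ c)
    (h : ∀ x, c * (x ⬝ᵥ A *ᵥ x) ≤ x ⬝ᵥ B *ᵥ x) (k : Fin n) :
    c * hA.sortedEigenvalues k ≤ hB.sortedEigenvalues k := by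
  set σ := Tuple.sort hA.eigenvalues
  set τ := Tuple.sort hB.eigenvalues
  let v : {j // j ≠ k} → Fin n → ℝ := fun j =>
    if j.1 < k then ⇑(hA.eigenvectorBasis (σ j)) else ⇑(hB.eigenvectorBasis (τ j))
  obtain ⟨x, hx0, hx⟩ := exists_ne_zero_forall_dotProduct_eq_zero
    (by simp [Fintype.card_subtype_compl, k.pos]) v
  have hxA : hA.sortedEigenvalues k * (x ⬝ᵥ x) ≤ x ⬝ᵥ A *ᵥ x := by
    refine hA.mul_dotProduct_self_le_dotProduct_mulVec fun i hi => ?_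
    obtain ⟨j, rfl⟩ := σ.surjective i
    have hjk : j < k := lt_of_not_ge fun hkj => hi.not_ge (hA.monotone_sortedEigenvalues hkj)
    simpa [v, hjk] using hx ⟨j, hjk.ne⟩
  have hxB : x ⬝ᵥ B *ᵥ x ≤ hB.sortedEigenvalues k * (x ⬝ᵥ x) := by
    refine hB.dotProduct_mulVec_le_mul_dotProduct_self fun i hi => ?_
    obtain ⟨j, rfl⟩ := τ.surjective i
    have hkj : k < j := lt_of_not_ge fun hjk => hi.not_ge (hB.monotone_sortedEigenvalues hjk)
    simpa [v, hkj.not_gt] using hx ⟨j, hkj.ne'⟩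
  have hx_pos : 0 < x ⬝ᵥ x := by simpa using dotProduct_self_star_pos_iff.mpr hx0
  refine le_of_mul_le_mul_right ?_ hx_pos
  calc c * hA.sortedEigenvalues k * (x ⬝ᵥ x) ≤ c * (x ⬝ᵥ A *ᵥ x) := by
        rw [mul_assoc]; exact mul_le_mul_of_nonneg_left hxA hc
    _ ≤ x ⬝ᵥ B *ᵥ x := h x
    _ ≤ hB.sortedEigenvalues k * (x ⬝ᵥ x) := hxB

end Matrix.IsHermitian

section WeightedLaplacian

open Classical

variable {n : ℕ} (G : SimpleGraph (Fin n))

lemma wLap_mulVec (w : Fin n → Fin n → ℝ) (x : Fin n → ℝ) (i : Fin n) :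
    (wLap G w *ᵥ x) i = ∑ j, if G.Adj i j then w i j * (x i - x j) else 0 := by
  have hentry : ∀ j, wLap G w i j
      = (if i = j then ∑ k, (if G.Adj i k then w i k else 0) else 0)
        - (if G.Adj i j then w i j else 0) := by
    intro j
    rcases eq_or_ne i j with rfl | hij
    · simp [wLap]
    · by_cases h : G.Adj i j <;> simp [wLap, hij, h]
  simp only [mulVec, dotProduct, hentry, sub_mul, sum_sub_distrib, ite_mul, zero_mul,
    sum_ite_eq, mem_univ, if_true, sum_mul]
  rw [← sum_sub_distrib]
  refine sum_congr rfl fun j _ => ?_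
  split_ifs <;> ring

lemma dotProduct_wLap_mulVec_self {w : Fin n → Fin n → ℝ}
    (hsym : ∀ i j, G.Adj i j → w i j = w j i) (x : Fin n → ℝ) :
    x ⬝ᵥ wLap G w *ᵥ x = (∑ i, ∑ j, if G.Adj i j then w i j * (x i - x j) ^ 2 else 0) / 2 := by
  set f : Fin n → Fin n → ℝ := fun i j => if G.Adj i j then w i j * (x i * (x i - x j)) else 0
  have hx : x ⬝ᵥ wLap G w *ᵥ x = ∑ i, ∑ j, f i j := by
    simp only [dotProduct, wLap_mulVec, mul_sum, f]
    refine sum_congr rfl fun i _ => sum_congr rfl fun j _ => ?_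
    split_ifs <;> ring
  have hswap : ∑ i, ∑ j, f i j = ∑ i, ∑ j, f j i := sum_comm
  rw [hx, eq_div_iff two_ne_zero, mul_two]
  nth_rewrite 2 [hswap]
  simp only [← sum_add_distrib]
  refine sum_congr rfl fun i _ => sum_congr rfl fun j _ => ?_
  by_cases h : G.Adj i j
  · simp only [f, if_pos h, if_pos h.symm, hsym i j h]
    ring
  · simp [f, h, G.adj_comm]

lemma lapMatrix_eq_wLap_one [DecidableRel G.Adj] : G.lapMatrix ℝ = wLap G fun _ _ => 1 := by
  ext i j
  rcases eq_or_ne i j with rfl | hij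
  · simp [wLap, SimpleGraph.lapMatrix, SimpleGraph.degMatrix, SimpleGraph.degree,
      SimpleGraph.neighborFinset_eq_filter]
  · by_cases h : G.Adj i j <;>
      simp [wLap, SimpleGraph.lapMatrix, SimpleGraph.degMatrix, hij, h]

lemma mul_dotProduct_wLap_mulVec_le {w w' : Fin n → Fin n → ℝ}
    (hsym : ∀ i j, G.Adj i j → w i j = w j i) (hsym' : ∀ i j, G.Adj i j → w' i j = w' j i)
    {c : ℝ} (hc : ∀ i j, G.Adj i j → c * w i j ≤ w' i j) (x : Fin n → ℝ) :
    c * (x ⬝ᵥ wLap G w *ᵥ x) ≤ x ⬝ᵥ wLap G w' *ᵥ x := by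
  rw [dotProduct_wLap_mulVec_self G hsym, dotProduct_wLap_mulVec_self G hsym', mul_div_assoc']
  gcongr
  simp_rw [mul_sum]
  gcongr with i _ j _
  rw [mul_ite, mul_zero]
  split_ifs with h
  · rw [← mul_assoc]; exact mul_le_mul_of_nonneg_right (hc i j h) (sq_nonneg _)
  · rfl

end WeightedLaplacian

lemma exists_pos_forall_le_of_pos {α : Type*} [Fintype α] {p : α → Prop} [DecidablePred p]
    {f : α → ℝ} (hf : ∀ a, p a → 0 < f a) : ∃ c > 0, ∀ a, p a → c ≤ f a := by
  by_cases hs : (univ.filter p).Nonempty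
  · obtain ⟨a₀, ha₀, hmin⟩ := (univ.filter p).exists_min_image f hs
    exact ⟨f a₀, hf a₀ (mem_filter.mp ha₀).2,
      fun a ha => hmin a (mem_filter.mpr ⟨mem_univ a, ha⟩)⟩
  · exact ⟨1, one_pos, fun a ha => absurd ⟨a, mem_filter.mpr ⟨mem_univ a, ha⟩⟩ hs⟩

lemma inv_le_inv_of_le_of_mul_le {a b c : ℝ} (ha : 0 ≤ a) (hc : 0 < c) (hba : b ≤ a)
    (hab : c * a ≤ b) : a⁻¹ ≤ b⁻¹ := by
  rcases ha.eq_or_lt with rfl | ha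
  · simpa using hab
  · exact inv_anti₀ (lt_of_lt_of_le (mul_pos hc ha) hab) hba

theorem stmt_4_general {n : ℕ} (G : SimpleGraph (Fin n))
    (w : Fin n → Fin n → ℝ) (hsym : ∀ i j, w i j = w j i)
    (hpos : ∀ i j, G.Adj i j → 0 < w i j) (hone : ∀ i j, G.Adj i j → w i j ≤ 1)
    (hH : (wLap G w).IsHermitian) :
    (∀ i, (hH.eigenvalues ∘ Tuple.sort hH.eigenvalues) i ≤ sortedLapEigs G i) ∧
    (∑ i, (lapEigs G i)⁻¹ ≤ ∑ i, (hH.eigenvalues i)⁻¹) ∧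
    Hstar G ≤ (1 / (2 * n)) * ∑ i, (hH.eigenvalues i)⁻¹ := by
  -- the instance used in `lapEigs`, so that `lapEigs G` is `hL.eigenvalues` by definition
  let := Classical.decRel G.Adj
  have hLpsd := SimpleGraph.posSemidef_lapMatrix ℝ G
  let hL := hLpsd.isHermitian
  have hsymw : ∀ i j, G.Adj i j → w i j = w j i := fun i j _ => hsym i j
  have hsym1 : ∀ i j, G.Adj i j → (1 : ℝ) = 1 := fun _ _ _ => rfl
  obtain ⟨c, hc, hcw⟩ := exists_pos_forall_le_of_pos
    (p := fun e : Fin n × Fin n => G.Adj e.1 e.2) (f := fun e => w e.1 e.2) fun e => hpos e.1 e.2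
  have hle : ∀ k, hH.sortedEigenvalues k ≤ hL.sortedEigenvalues k := fun k => by
    simpa only [one_mul] using hH.mul_sortedEigenvalues_le hL zero_le_one (fun x => by
      rw [lapMatrix_eq_wLap_one]
      exact mul_dotProduct_wLap_mulVec_le G hsymw hsym1
        (by simpa only [one_mul] using hone) x) k
  have hge : ∀ k, c * hL.sortedEigenvalues k ≤ hH.sortedEigenvalues k :=
    hL.mul_sortedEigenvalues_le hH hc.le fun x => by
      rw [lapMatrix_eq_wLap_one]
      exact mul_dotProduct_wLap_mulVec_le G hsym1 hsymw
        (by simpa only [mul_one] using fun i j h => hcw (i, j) h) x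
  have hinv : ∑ i, (lapEigs G i)⁻¹ ≤ ∑ i, (hH.eigenvalues i)⁻¹ := by
    rw [← Equiv.sum_comp (Tuple.sort hL.eigenvalues) fun i => (lapEigs G i)⁻¹,
      ← Equiv.sum_comp (Tuple.sort hH.eigenvalues) fun i => (hH.eigenvalues i)⁻¹]
    exact sum_le_sum fun k _ =>
      inv_le_inv_of_le_of_mul_le (hLpsd.eigenvalues_nonneg _) hc (hle k) (hge k)
  exact ⟨hle, hinv, mul_le_mul_of_nonneg_left hinv (by positivity)⟩

/-- for weights `0 < w ≤ 1` on the edges, each (sorted) eigenvalue of `L_w`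
is at most the corresponding eigenvalue of `L`; consequently
`∑ 1/λᵢ(L_w) ≥ ∑ 1/λᵢ(L)`, i.e. `H(G,w)` is minimized at `w = 1`. -/
theorem stmt_4 {n : ℕ} (hn : 2 ≤ n) (G : SimpleGraph (Fin n)) (hG : G.Connected)
    (w : Fin n → Fin n → ℝ) (hsym : ∀ i j, w i j = w j i)
    (hpos : ∀ i j, G.Adj i j → 0 < w i j) (hone : ∀ i j, G.Adj i j → w i j ≤ 1)
    (hH : (wLap G w).IsHermitian) :
    (∀ i, (hH.eigenvalues ∘ Tuple.sort hH.eigenvalues) i ≤ sortedLapEigs G i) ∧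
    (∑ i, (lapEigs G i)⁻¹ ≤ ∑ i, (hH.eigenvalues i)⁻¹) ∧
    Hstar G ≤ (1 / (2 * n)) * ∑ i, (hH.eigenvalues i)⁻¹ :=
  stmt_4_general G w hsym hpos hone hH
end

section
/- For the cycle graph Cₙ on n ≥ 3 vertices, ∑_{i=2}^n 1/λᵢ(L) = (n²-1)/12, i.e., H*(Cₙ) = (n²-1)/(24n). -/
/-!
The Laplacian of `Cₙ` is the circulant matrix of `2δ₀ - δ₁ - δ₋₁`, so the Fourier matrix
`(ζ^{jk})` of a primitive `n`-th root of unity `ζ` diagonalises it, with eigenvalues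
`2 - ζ^k - ζ^{-k} = (1 - ζ^k)(1 - ζ^{-k})`. For `z^n = 1 ≠ z` one has
`(1 - z)⁻¹ = -(1/n) ∑_{j<n} j z^j`, so the inverse of the `k`-th eigenvalue (`k ≠ 0`) is
`|Ŝ(k)|² / n²`, where `Ŝ` is the Fourier transform of `j ↦ j`. By Parseval the sum over `k ≠ 0` is
`(n ∑ j² - (∑ j)²) / n²`, the variance of the uniform distribution on `{0, …, n-1}`, i.e.
`(n² - 1) / 12`.
-/

open Finset Matrix Filter

open Polynomial

theorem Polynomial.sum_comp_eq_of_prod_X_sub_C_eq {R M ι κ : Type*} [CommRing R] [IsDomain R]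
    [AddCommMonoid M] [Fintype ι] [Fintype κ] {a : ι → R} {b : κ → R}
    (h : ∏ i, (X - C (a i)) = ∏ k, (X - C (b k))) (f : R → M) :
    ∑ i, f (a i) = ∑ k, f (b k) := by
  have hroots : univ.val.map a = univ.val.map b := by
    simpa [roots_prod, prod_ne_zero_iff, X_sub_C_ne_zero] using congrArg roots h
  simpa [Multiset.map_map] using congrArg (fun s => (s.map f).sum) hroots

theorem Matrix.charpoly_eq_prod_of_mul_eq_mul_diagonal {ι R : Type*} [Fintype ι] [DecidableEq ι]
    [CommRing R] {A F G : Matrix ι ι R} {d : ι → R} (hFG : F * G = 1)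
    (hAF : A * F = F * diagonal d) : A.charpoly = ∏ i, (X - C (d i)) := by
  have hA : A = F * (diagonal d * G) := by
    rw [← mul_assoc, ← hAF, mul_assoc, hFG, mul_one]
  rw [hA, charpoly_mul_comm, mul_assoc, mul_eq_one_comm.mp hFG, mul_one, charpoly_diagonal]

theorem pow_finVal_add_mul_of_pow_eq_one {M : Type*} [Monoid M] {n : ℕ} {ζ : M}
    (hζ : ζ ^ n = 1) (i j : Fin n) (k : ℕ) :
    ζ ^ ((i + j : Fin n) * k : ℕ) = ζ ^ (i * k : ℕ) * ζ ^ (j * k : ℕ) := by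
  have hmod : ζ ^ ((i + j : ℕ) % n) = ζ ^ (i + j : ℕ) := by
    conv_rhs => rw [← Nat.mod_add_div (i + j) n, pow_add, pow_mul, hζ, one_pow, mul_one]
  rw [← pow_add, ← add_mul, pow_mul, pow_mul, Fin.val_add, hmod]

def dftMatrix {M : Type*} [Monoid M] (ζ : M) (n : ℕ) : Matrix (Fin n) (Fin n) M :=
  of fun i j => ζ ^ (i * j : ℕ)

theorem circulant_mul_dftMatrix {R : Type*} [CommRing R] {n : ℕ} [NeZero n] {ζ : R}
    (hζ : ζ ^ n = 1) (v : Fin n → R) :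
    circulant v * dftMatrix ζ n
      = dftMatrix ζ n * diagonal fun k : Fin n => ∑ j, v (-j) * ζ ^ (j * k : ℕ) := by
  ext i k
  rw [mul_diagonal, mul_apply, ← Equiv.sum_comp (Equiv.addLeft i), Finset.mul_sum]
  refine Finset.sum_congr rfl fun j _ => ?_
  simp only [circulant_apply, dftMatrix, of_apply, Equiv.coe_addLeft, sub_add_cancel_left,
    pow_finVal_add_mul_of_pow_eq_one hζ]
  ring

namespace IsPrimitiveRoot

variable {K : Type*} [Field K] {n : ℕ} [NeZero n] {ζ : K}

theorem sum_pow_mul_inv_pow (hζ : IsPrimitiveRoot ζ n) (i j : Fin n) :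
    ∑ k : Fin n, ζ ^ (i * k : ℕ) * ζ⁻¹ ^ (k * j : ℕ) = if i = j then (n : K) else 0 := by
  have hone : ζ ^ (i : ℕ) * ζ⁻¹ ^ (j : ℕ) = 1 ↔ i = j := by
    rw [inv_pow, mul_inv_eq_one₀ (pow_ne_zero _ (hζ.ne_zero (NeZero.ne n))), ← Fin.val_inj]
    exact ⟨fun h => hζ.pow_inj i.isLt j.isLt h, fun h => by rw [h]⟩
  set z := ζ ^ (i : ℕ) * ζ⁻¹ ^ (j : ℕ)
  have hsum : ∑ k : Fin n, ζ ^ (i * k : ℕ) * ζ⁻¹ ^ (k * j : ℕ) = ∑ k ∈ range n, z ^ k := by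
    rw [← Fin.sum_univ_eq_sum_range]
    refine Finset.sum_congr rfl fun k _ => ?_
    rw [mul_pow, ← pow_mul, ← pow_mul, mul_comm (k : ℕ) j]
  rw [hsum]
  split_ifs with h
  · simp [hone.mpr h]
  · have hzn : z ^ n = 1 := by
      rw [mul_pow, ← pow_mul, ← pow_mul, mul_comm _ n, mul_comm _ n, pow_mul, pow_mul,
        hζ.pow_eq_one, inv_pow, hζ.pow_eq_one, inv_one, one_pow, one_pow, one_mul]
    rw [geom_sum_eq (mt hone.mp h), hzn, sub_self, zero_div]

theorem dftMatrix_mul_dftMatrix_inv (hζ : IsPrimitiveRoot ζ n) :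
    dftMatrix ζ n * dftMatrix ζ⁻¹ n = (n : K) • (1 : Matrix (Fin n) (Fin n) K) := by
  ext i j
  simp only [mul_apply, dftMatrix, of_apply, hζ.sum_pow_mul_inv_pow, Matrix.smul_apply,
    one_apply, smul_eq_mul, mul_ite, mul_one, mul_zero]

theorem charpoly_circulant (hζ : IsPrimitiveRoot ζ n) (v : Fin n → K) :
    (circulant v).charpoly = ∏ k : Fin n, (X - C (∑ j, v (-j) * ζ ^ (j * k : ℕ))) := by
  have hn : (n : K) ≠ 0 := hζ.neZero'.out
  refine charpoly_eq_prod_of_mul_eq_mul_diagonal (G := (n : K)⁻¹ • dftMatrix ζ⁻¹ n) ?_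
    (circulant_mul_dftMatrix hζ.pow_eq_one v)
  rw [Matrix.mul_smul, hζ.dftMatrix_mul_dftMatrix_inv, smul_smul, inv_mul_cancel₀ hn, one_smul]

theorem dotProduct_dftMatrix_mulVec (hζ : IsPrimitiveRoot ζ n) (f g : Fin n → K) :
    (dftMatrix ζ n *ᵥ f) ⬝ᵥ (dftMatrix ζ⁻¹ n *ᵥ g) = n * (f ⬝ᵥ g) := by
  have hsymm : (dftMatrix ζ n)ᵀ = dftMatrix ζ n := by
    ext i j
    simp only [transpose_apply, dftMatrix, of_apply, mul_comm]
  rw [dotProduct_mulVec, ← vecMul_transpose, hsymm, vecMul_vecMul,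
    hζ.dftMatrix_mul_dftMatrix_inv, vecMul_smul, vecMul_one, smul_dotProduct, smul_eq_mul]

end IsPrimitiveRoot

section PowerSums

variable {R : Type*} [CommRing R]

theorem sum_range_natCast_mul_two (n : ℕ) : (∑ j ∈ range n, (j : R)) * 2 = n * (n - 1) := by
  induction n with
  | zero => simp
  | succ n ih => rw [sum_range_succ, add_mul, ih]; push_cast; ring

theorem sum_range_natCast_sq_mul_six (n : ℕ) :
    (∑ j ∈ range n, (j : R) ^ 2) * 6 = n * (n - 1) * (2 * n - 1) := by
  induction n with
  | zero => simp
  | succ n ih => rw [sum_range_succ, add_mul, ih]; push_cast; ring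

theorem one_sub_mul_sum_range_natCast_mul_pow (z : R) (n : ℕ) :
    (1 - z) * ∑ j ∈ range n, (j : R) * z ^ j = ∑ j ∈ range n, z ^ j - 1 - (n - 1) * z ^ n := by
  induction n with
  | zero => simp
  | succ n ih => rw [sum_range_succ, sum_range_succ, mul_add, ih]; push_cast; ring

end PowerSums

section RootsOfUnity

variable {K : Type*} [Field K] {n : ℕ}

theorem inv_one_sub_eq_of_pow_eq_one (hn : (n : K) ≠ 0) {z : K} (hz : z ^ n = 1)
    (h1 : z ≠ 1) : (1 - z)⁻¹ = -(n : K)⁻¹ * ∑ j : Fin n, z ^ (j : ℕ) * j := by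
  have key : (1 - z) * ∑ j ∈ range n, (j : K) * z ^ j = -n := by
    rw [one_sub_mul_sum_range_natCast_mul_pow, geom_sum_eq h1, hz]
    ring
  have hz1 : 1 - z ≠ 0 := sub_ne_zero.mpr h1.symm
  rw [Fin.sum_univ_eq_sum_range (fun j => z ^ j * (j : K))]
  simp_rw [mul_comm (z ^ _)]
  field_simp
  linear_combination key

theorem inv_two_sub_sub_inv_eq_of_pow_eq_one (hn : (n : K) ≠ 0) {z : K} (hz : z ^ n = 1)
    (h1 : z ≠ 1) :
    (2 - z - z⁻¹)⁻¹
      = ((n : K) ^ 2)⁻¹ * ((∑ j : Fin n, z ^ (j : ℕ) * j) * ∑ j : Fin n, z⁻¹ ^ (j : ℕ) * j) := by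
  have hz0 : z ≠ 0 := by rintro rfl; simp_all [zero_pow_eq]
  have hfac : 2 - z - z⁻¹ = (1 - z) * (1 - z⁻¹) := by field_simp; ring
  rw [hfac, mul_inv, inv_one_sub_eq_of_pow_eq_one hn hz h1,
    inv_one_sub_eq_of_pow_eq_one hn (by rw [inv_pow, hz, inv_one]) (inv_ne_one.mpr h1)]
  ring

theorem IsPrimitiveRoot.sum_inv_two_sub_pow_sub_inv_pow [CharZero K] [NeZero n] {ζ : K}
    (hζ : IsPrimitiveRoot ζ n) :
    ∑ k : Fin n, (2 - ζ ^ (k : ℕ) - (ζ ^ (k : ℕ))⁻¹)⁻¹ = ((n : K) ^ 2 - 1) / 12 := by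
  have hn : (n : K) ≠ 0 := NeZero.ne _
  set w : Fin n → K := fun j => j
  have hdft : ∀ (z : K) (k : Fin n),
      (dftMatrix z n *ᵥ w) k = ∑ j : Fin n, (z ^ (k : ℕ)) ^ (j : ℕ) * j := fun z k => by
    simp only [mulVec, dotProduct, dftMatrix, of_apply, w, pow_mul]
  -- At `k = 0` the left side is `0⁻¹ = 0`, while the Parseval term is `(∑ j)² / n²`.
  have hterm : ∀ k : Fin n, (2 - ζ ^ (k : ℕ) - (ζ ^ (k : ℕ))⁻¹)⁻¹
      = ((n : K) ^ 2)⁻¹ * ((dftMatrix ζ n *ᵥ w) k * (dftMatrix ζ⁻¹ n *ᵥ w) k)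
        - if k = 0 then ((n : K) ^ 2)⁻¹ * (∑ j, w j) ^ 2 else 0 := by
    intro k
    rw [hdft, hdft, inv_pow]
    split_ifs with hk
    · subst hk
      simp only [Fin.val_zero, pow_zero, inv_one, one_pow, one_mul, w]
      norm_num [sq]
    · rw [sub_zero]
      refine inv_two_sub_sub_inv_eq_of_pow_eq_one hn ?_ ?_
      · rw [← pow_mul, mul_comm, pow_mul, hζ.pow_eq_one, one_pow]
      · exact hζ.pow_ne_one_of_pos_of_lt (Fin.val_ne_zero_iff.mpr hk) k.isLt
  have hsum : ∑ j ∈ range n, (j : K) = n * (n - 1) / 2 :=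
    eq_div_of_mul_eq two_ne_zero (sum_range_natCast_mul_two n)
  have hsq : ∑ j ∈ range n, (j : K) ^ 2 = n * (n - 1) * (2 * n - 1) / 6 :=
    eq_div_of_mul_eq (by norm_num) (sum_range_natCast_sq_mul_six n)
  rw [Finset.sum_congr rfl fun k _ => hterm k, sum_sub_distrib, ← mul_sum,
    ← dotProduct, hζ.dotProduct_dftMatrix_mulVec, sum_ite_eq', if_pos (mem_univ 0)]
  simp only [dotProduct, w, ← sq, Fin.sum_univ_eq_sum_range (fun j => (j : K) ^ 2),
    Fin.sum_univ_eq_sum_range (fun j => (j : K)), hsum, hsq]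
  field_simp
  ring

end RootsOfUnity

namespace SimpleGraph

theorem map_lapMatrix {V R S : Type*} [Fintype V] [DecidableEq V] (G : SimpleGraph V)
    [DecidableRel G.Adj] [NonAssocRing R] [NonAssocRing S] (f : R →+* S) :
    (G.lapMatrix R).map f = G.lapMatrix S := by
  ext i j
  by_cases h : i = j <;> simp [lapMatrix, degMatrix, adjMatrix_apply, h]

theorem lapMatrix_cycleGraph {R : Type*} [AddGroupWithOne R] (m : ℕ)
    [DecidableRel (cycleGraph (m + 3)).Adj] :
    (cycleGraph (m + 3)).lapMatrix R
      = circulant (Pi.single 0 2 - Pi.single 1 1 - Pi.single (-1) 1) := by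
  obtain rfl : ‹DecidableRel (cycleGraph (m + 3)).Adj› = instDecidableRelFinAdjCycleGraph _ :=
    Subsingleton.elim _ _
  have hone : (1 : Fin (m + 3)) ≠ -1 := by
    rw [Ne, eq_neg_iff_add_eq_zero, Fin.ext_iff]
    simp only [Fin.val_add, Fin.val_one, Fin.val_zero]
    rw [Nat.mod_eq_of_lt (by omega)]
    omega
  ext i j
  simp only [lapMatrix, degMatrix, Matrix.sub_apply, diagonal_apply, adjMatrix_apply,
    circulant_apply, Pi.sub_apply, Pi.single_apply, cycleGraph_degree_three_le, cycleGraph_adj,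
    sub_eq_zero, ← neg_sub i j, neg_eq_iff_eq_neg, Nat.cast_ofNat]
  split_ifs <;> simp_all

theorem charpoly_lapMatrix_cycleGraph {K : Type*} [Field K] {m : ℕ} {ζ : K}
    (hζ : IsPrimitiveRoot ζ (m + 3)) [DecidableRel (cycleGraph (m + 3)).Adj] :
    ((cycleGraph (m + 3)).lapMatrix K).charpoly
      = ∏ k : Fin (m + 3), (X - C (2 - ζ ^ (k : ℕ) - (ζ ^ (k : ℕ))⁻¹)) := by
  rw [lapMatrix_cycleGraph, hζ.charpoly_circulant]
  refine Finset.prod_congr rfl fun k _ => ?_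
  have hinv : ζ ^ ((-1 : Fin (m + 3)) * k : ℕ) = (ζ ^ (k : ℕ))⁻¹ := by
    have h := pow_finVal_add_mul_of_pow_eq_one hζ.pow_eq_one (-1) 1 k
    rw [neg_add_cancel, Fin.val_zero, zero_mul, pow_zero, Fin.val_one, one_mul] at h
    exact eq_inv_of_mul_eq_one_left h.symm
  simp only [Pi.sub_apply, Pi.single_apply, neg_eq_iff_eq_neg, sub_mul, ite_mul, zero_mul,
    sum_sub_distrib, sum_ite_eq', mem_univ, if_true, neg_zero, Fin.val_zero, hinv, Fin.val_one,
    one_mul, pow_zero, mul_one, neg_neg]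
  rw [sub_right_comm]

end SimpleGraph

theorem sum_inv_lapEigs_cycleGraph (m : ℕ) :
    ∑ i, (lapEigs (SimpleGraph.cycleGraph (m + 3)) i)⁻¹ = (((m + 3 : ℕ) : ℝ) ^ 2 - 1) / 12 := by
  set G := SimpleGraph.cycleGraph (m + 3)
  let _ : DecidableRel G.Adj := Classical.decRel G.Adj
  have hL := (SimpleGraph.posSemidef_lapMatrix ℝ G).isHermitian
  obtain ⟨ζ, hζ⟩ : ∃ ζ : ℂ, IsPrimitiveRoot ζ (m + 3) :=
    ⟨_, Complex.isPrimitiveRoot_exp (m + 3) (by omega)⟩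
  have hcharpoly : ∏ i, (X - C ((hL.eigenvalues i : ℂ)))
      = ∏ k : Fin (m + 3), (X - C (2 - ζ ^ (k : ℕ) - (ζ ^ (k : ℕ))⁻¹)) := by
    rw [← SimpleGraph.charpoly_lapMatrix_cycleGraph hζ, ← G.map_lapMatrix Complex.ofRealHom,
      charpoly_map, hL.charpoly_eq, Polynomial.map_prod]
    simp
  have hsum := Polynomial.sum_comp_eq_of_prod_X_sub_C_eq hcharpoly (·⁻¹)
  rw [hζ.sum_inv_two_sub_pow_sub_inv_pow] at hsum
  exact_mod_cast hsum

/-- for the cycle graph `Cₙ`, `∑_{i=2}^n 1/λᵢ = (n²-1)/12`,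
i.e. `H*(Cₙ) = (n²-1)/(24n)`. -/
theorem stmt_8 (n : ℕ) (hn : 3 ≤ n) :
    (∑ i, (lapEigs (SimpleGraph.cycleGraph n) i)⁻¹ = ((n : ℝ)^2 - 1) / 12) ∧
    Hstar (SimpleGraph.cycleGraph n) = ((n : ℝ)^2 - 1) / (24 * (n : ℝ)) := by
  obtain ⟨m, rfl⟩ : ∃ m, n = m + 3 := ⟨n - 3, by omega⟩
  have hsum := sum_inv_lapEigs_cycleGraph m
  refine ⟨hsum, ?_⟩
  rw [Hstar, hsum]
  field_simp
  ring
end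

section
/- For any connected undirected graph G on n ≥ 2 vertices, H*(G) ≤ δ̃(G)·(n-1)/(4n), where δ̃(G) = (2/(n²-n))·∑_{i<j} δ_{ij} is the average distance between vertices; equality holds if and only if G is a tree. -/
open Finset Matrix Filter

/-
The Kirchhoff index `n ∑ 1/λᵢ` is the sum over pairs of the effective resistances
`R(i,j) = (eᵢ - eⱼ)ᵀ L⁺ (eᵢ - eⱼ)`, `L⁺` the pseudoinverse of the Laplacian. If `L y = eᵢ - eⱼ` then
`R(i,j) = yᵢ - yⱼ = yᵀ L y`, and Cauchy–Schwarz along a shortest path gives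
`(yᵢ - yⱼ)² ≤ δᵢⱼ · yᵀ L y`, so `R(i,j) ≤ δᵢⱼ`. In a tree `y = (δ(j,·) - δ(i,·)) / 2` solves
`L y = eᵢ - eⱼ`, so `R = δ`. A connected graph that is not a tree has an edge `ab` that is not a
bridge, and `R(a,b) < 1 = δ_ab`: were `R(a,b) = 1`, the edge `ab` alone would carry all of the
energy `yᵀ L y = R(a,b)`, so `y` would be constant along a walk from `a` to `b` avoiding `ab`,
forcing `R(a,b) = yₐ - y_b = 0`.
-/

namespace Matrix

variable {ι : Type*} [Fintype ι] [DecidableEq ι] {A : Matrix ι ι ℝ}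

theorem IsHermitian.trace_cfc (hA : A.IsHermitian) (f : ℝ → ℝ) :
    (cfc f A).trace = ∑ i, f (hA.eigenvalues i) := by
  rw [hA.cfc_eq, IsHermitian.cfc, Unitary.conjStarAlgAut_apply, trace_mul_cycle]
  simp [trace_diagonal]

theorem cfc_mul_cfc (f g : ℝ → ℝ) : cfc f A * cfc g A = cfc (fun x => f x * g x) A :=
  (cfc_mul f g A (A.finite_real_spectrum.continuousOn f)
    (A.finite_real_spectrum.continuousOn g)).symm

theorem transpose_cfc (f : ℝ → ℝ) : (cfc f A)ᵀ = cfc f A := by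
  simpa [IsSelfAdjoint, star_eq_conjTranspose] using cfc_predicate f A

theorem IsHermitian.mul_mul_cfc_inv (hA : A.IsHermitian) :
    A * (A * cfc (fun x : ℝ => x⁻¹) A) = A := by
  have hid : cfc (fun x : ℝ => x) A = A := cfc_id' ℝ A hA
  calc A * (A * cfc (fun x : ℝ => x⁻¹) A)
      = cfc (fun x : ℝ => x) A * (cfc (fun x : ℝ => x) A * cfc (fun x : ℝ => x⁻¹) A) := by
        rw [hid]
    _ = A := by simp_rw [cfc_mul_cfc, ← mul_assoc, mul_self_mul_inv, hid]

theorem IsHermitian.cfc_inv_mulVec_of_mulVec_eq_zero (hA : A.IsHermitian) {v : ι → ℝ}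
    (hv : A *ᵥ v = 0) : cfc (fun x : ℝ => x⁻¹) A *ᵥ v = 0 := by
  have hid : cfc (fun x : ℝ => x) A = A := cfc_id' ℝ A hA
  have h : cfc (fun x : ℝ => x⁻¹) A
      = cfc (fun x : ℝ => x⁻¹) A * cfc (fun x : ℝ => x⁻¹) A * cfc (fun x : ℝ => x) A := by
    rw [cfc_mul_cfc, cfc_mul_cfc]
    congr 1 with x
    rcases eq_or_ne x 0 with rfl | hx
    · simp
    · field_simp
  rw [h, hid, ← mulVec_mulVec, hv, mulVec_zero]

end Matrix

theorem List.sq_sum_le_length_mul_sum_sq (l : List ℝ) :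
    l.sum ^ 2 ≤ l.length * (l.map (· ^ 2)).sum := by
  induction l with
  | nil => simp
  | cons a l ih =>
    simp only [List.sum_cons, List.map_cons, List.length_cons, Nat.cast_succ]
    rcases (Nat.zero_le l.length).eq_or_lt with hk | hk
    · simp [List.length_eq_zero_iff.mp hk.symm]
    · have hk' : (0 : ℝ) < l.length := by exact_mod_cast hk
      nlinarith [sq_nonneg (l.length * a - l.sum), mul_le_mul_of_nonneg_left ih hk'.le]

namespace SimpleGraph

variable {V : Type*}

def edgeEnergy (x : V → ℝ) : Sym2 V → ℝ :=
  Sym2.lift ⟨fun a b => (x a - x b) ^ 2, fun a b => by ring⟩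

theorem edgeEnergy_nonneg (x : V → ℝ) (e : Sym2 V) : 0 ≤ edgeEnergy x e := by
  induction e using Sym2.ind with
  | _ a b => exact sq_nonneg _

section Walks

variable {G : SimpleGraph V}

theorem Walk.sum_darts_sub {u v : V} (x : V → ℝ) (p : G.Walk u v) :
    (p.darts.map fun d => x d.fst - x d.snd).sum = x u - x v := by
  induction p with
  | nil => simp
  | cons _ _ ih => simp [ih]

theorem Walk.sq_sub_le_length_mul_sum_edgeEnergy {u v : V} (x : V → ℝ) (p : G.Walk u v) :
    (x u - x v) ^ 2 ≤ p.length * (p.edges.map (edgeEnergy x)).sum := by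
  have h := List.sq_sum_le_length_mul_sum_sq (p.darts.map fun d => x d.fst - x d.snd)
  rw [p.sum_darts_sub, List.length_map, p.length_darts, List.map_map] at h
  convert h using 3
  rw [Walk.edges, List.map_map]
  rfl

theorem IsTree.dist_sub_dist_of_adj [DecidableEq V] (hT : G.IsTree) (t : V) {v : V}
    (hvt : v ≠ t) :
    ∃ w, G.Adj v w ∧ ∀ u, G.Adj v u → (G.dist t v : ℝ) - G.dist t u = if u = w then 1 else -1 := by
  obtain ⟨p, hp, hlen⟩ := hT.connected.exists_path_of_dist t v
  have hnil : ¬ p.Nil := fun h => hvt h.eq.symm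
  have hcloser : ∀ u, G.Adj v u → G.dist t u < G.dist t v → u = p.penultimate := by
    intro u hu hlt
    obtain ⟨q, hq, hqlen⟩ := hT.connected.exists_path_of_dist t u
    have hvq : v ∉ q.support := fun hv => by
      have := G.dist_le (q.takeUntil v hv)
      have := q.length_takeUntil_le_length hv
      omega
    exact hT.isAcyclic.eq_penultimate_of_adj_end hp hu
      (hT.isAcyclic.mem_support_of_ne_mem_support_of_adj_of_isPath hp hq hu hvq)
  have hpen : G.dist t p.penultimate + 1 = G.dist t v := by
    have := G.dist_le p.dropLast
    have := p.length_dropLast_add_one hnil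
    rcases hT.dist_eq_dist_add_one_of_adj t (p.adj_penultimate hnil) <;> omega
  refine ⟨p.penultimate, (p.adj_penultimate hnil).symm, fun u hu => ?_⟩
  rcases hT.dist_eq_dist_add_one_of_adj t hu with h | h
  · rw [if_pos (hcloser u hu (by omega)), h]
    push_cast
    ring
  · rw [if_neg (by rintro rfl; omega), h]
    push_cast
    ring

end Walks

variable [Fintype V] (G : SimpleGraph V) [DecidableRel G.Adj]

theorem sum_darts_eq_sum_adj {M : Type*} [AddCommMonoid M] (g : V → V → M) :
    ∑ d : G.Dart, g d.fst d.snd = ∑ u, ∑ v, if G.Adj u v then g u v else 0 := by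
  let e : G.Dart ≃ {p : V × V // G.Adj p.1 p.2} :=
    ⟨fun d => ⟨d.toProd, d.adj⟩, fun p => ⟨p.1, p.2⟩, fun _ => rfl, fun _ => rfl⟩
  calc ∑ d : G.Dart, g d.fst d.snd = ∑ p : {p : V × V // G.Adj p.1 p.2}, g p.1.1 p.1.2 :=
        Fintype.sum_equiv e _ _ fun _ => rfl
    _ = ∑ p ∈ Finset.univ.filter (fun p : V × V => G.Adj p.1 p.2), g p.1 p.2 :=
        (Finset.sum_subtype _ (fun _ => Finset.mem_filter_univ _) fun q : V × V => g q.1 q.2).symm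
    _ = _ := by rw [Finset.sum_filter, Fintype.sum_prod_type]

variable [DecidableEq V]

theorem sum_darts_edge {M : Type*} [AddCommMonoid M] (f : Sym2 V → M) :
    ∑ d : G.Dart, f d.edge = 2 • ∑ e ∈ G.edgeFinset, f e := by
  have himage : (Finset.univ : Finset G.Dart).image Dart.edge = G.edgeFinset := by
    ext e
    simp only [Finset.mem_image, Finset.mem_univ, true_and, mem_edgeFinset]
    refine ⟨fun ⟨d, hd⟩ => hd ▸ d.edge_mem, fun he => ?_⟩
    induction e using Sym2.ind with
    | _ u v => exact ⟨⟨(u, v), he⟩, rfl⟩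
  rw [Finset.sum_comp, Finset.smul_sum, himage]
  exact Finset.sum_congr rfl fun e he => by rw [G.dart_edge_fiber_card e (mem_edgeFinset.mp he)]

theorem dotProduct_lapMatrix_mulVec (x : V → ℝ) :
    x ⬝ᵥ (G.lapMatrix ℝ *ᵥ x) = ∑ e ∈ G.edgeFinset, edgeEnergy x e := by
  have h := G.lapMatrix_toLinearMap₂' ℝ x
  rw [Matrix.toLinearMap₂'_apply'] at h
  rw [h, ← G.sum_darts_eq_sum_adj fun u v => (x u - x v) ^ 2]
  have := G.sum_darts_edge (edgeEnergy x)
  simp only [nsmul_eq_mul, Nat.cast_ofNat] at this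
  rw [div_eq_iff two_ne_zero, mul_comm, ← this]
  rfl

theorem dotProduct_lapMatrix_mulVec_comm (x y : V → ℝ) :
    x ⬝ᵥ (G.lapMatrix ℝ *ᵥ y) = (G.lapMatrix ℝ *ᵥ x) ⬝ᵥ y := by
  rw [dotProduct_mulVec, ← mulVec_transpose, isSymm_lapMatrix ℝ G]

theorem sum_lapMatrix_mulVec (y : V → ℝ) : ∑ u, (G.lapMatrix ℝ *ᵥ y) u = 0 := by
  rw [← one_dotProduct, dotProduct_lapMatrix_mulVec_comm]
  exact (congrArg (· ⬝ᵥ y) G.lapMatrix_mulVec_const_eq_zero).trans (zero_dotProduct y)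

/-- The Moore–Penrose pseudoinverse `L⁺` of the Laplacian: it inverts the nonzero eigenvalues and,
since `(0 : ℝ)⁻¹ = 0`, kills the kernel. -/
noncomputable def lapPinv : Matrix V V ℝ := cfc (fun x : ℝ => x⁻¹) (G.lapMatrix ℝ)

noncomputable def effectiveResistance (i j : V) : ℝ :=
  (Pi.single i 1 - Pi.single j 1 : V → ℝ) ⬝ᵥ (G.lapPinv *ᵥ (Pi.single i 1 - Pi.single j 1))

theorem lapPinv_mulVec_const_eq_zero : G.lapPinv *ᵥ (fun _ => 1) = 0 :=
  (isHermitian_lapMatrix ℝ G).cfc_inv_mulVec_of_mulVec_eq_zero G.lapMatrix_mulVec_const_eq_zero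

theorem sum_sum_effectiveResistance :
    ∑ i, ∑ j, G.effectiveResistance i j = 2 * Fintype.card V * G.lapPinv.trace := by
  have hrow : ∀ i, ∑ j, G.lapPinv i j = 0 := fun i => by
    simpa [mulVec, dotProduct] using congrFun G.lapPinv_mulVec_const_eq_zero i
  have hsymm : ∀ i j, G.lapPinv i j = G.lapPinv j i := fun i j =>
    congrFun (congrFun (transpose_cfc (A := G.lapMatrix ℝ) _) j) i
  have hcol : ∀ j, ∑ i, G.lapPinv i j = 0 := fun j =>
    (Finset.sum_congr rfl fun i _ => hsymm i j).trans (hrow j)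
  have hR : ∀ i j, G.effectiveResistance i j =
      G.lapPinv i i + G.lapPinv j j - G.lapPinv i j - G.lapPinv j i := fun i j => by
    simp only [effectiveResistance, mulVec_sub, mulVec_single, MulOpposite.op_one, one_smul,
      dotProduct_sub, sub_dotProduct, single_dotProduct, col_apply, one_mul]
    ring
  simp only [hR, Finset.sum_sub_distrib, Finset.sum_add_distrib, hrow, hcol, Finset.sum_const,
    Finset.card_univ, nsmul_eq_mul, ← Finset.mul_sum]
  rw [trace]
  simp only [Matrix.diag_apply]
  ring

variable {G}

theorem Walk.IsTrail.sum_edges_le {u v : V} {p : G.Walk u v} (hp : p.IsTrail) {f : Sym2 V → ℝ}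
    (hf : ∀ e, 0 ≤ f e) : (p.edges.map f).sum ≤ ∑ e ∈ G.edgeFinset, f e := by
  rw [← List.sum_toFinset f hp.edges_nodup]
  refine Finset.sum_le_sum_of_subset_of_nonneg (fun e he => ?_) fun e _ _ => hf e
  exact mem_edgeFinset.mpr (p.edges_subset_edgeSet (List.mem_toFinset.mp he))

theorem Walk.IsTrail.sq_sub_le_length_mul_energy {u v : V} {p : G.Walk u v} (hp : p.IsTrail)
    (x : V → ℝ) : (x u - x v) ^ 2 ≤ p.length * (x ⬝ᵥ (G.lapMatrix ℝ *ᵥ x)) := by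
  rw [G.dotProduct_lapMatrix_mulVec]
  exact (p.sq_sub_le_length_mul_sum_edgeEnergy x).trans <|
    mul_le_mul_of_nonneg_left (hp.sum_edges_le (edgeEnergy_nonneg x)) (Nat.cast_nonneg _)

theorem Connected.lapMatrix_mulVec_lapPinv_mulVec (hG : G.Connected) (i j : V) :
    G.lapMatrix ℝ *ᵥ (G.lapPinv *ᵥ (Pi.single i 1 - Pi.single j 1)) =
      Pi.single i 1 - Pi.single j 1 := by
  set w : V → ℝ := Pi.single i 1 - Pi.single j 1
  set z := w - G.lapMatrix ℝ *ᵥ (G.lapPinv *ᵥ w)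
  have hLz : G.lapMatrix ℝ *ᵥ z = 0 := by
    rw [mulVec_sub, mulVec_mulVec, mulVec_mulVec, Matrix.mul_assoc, lapPinv,
      (G.isHermitian_lapMatrix ℝ).mul_mul_cfc_inv, sub_self]
  have hconst : ∀ u, z u = z i := fun u =>
    G.lapMatrix_mulVec_eq_zero_iff_forall_reachable.mp hLz u i (hG.preconnected u i)
  have hsum : ∑ u, z u = 0 := by
    simp only [z, w, Pi.sub_apply, Finset.sum_sub_distrib, sum_lapMatrix_mulVec,
      Finset.sum_pi_single', if_true, Finset.mem_univ, sub_self]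
  have hzi : z i = 0 := by
    rw [Finset.sum_congr rfl fun u _ => hconst u, Finset.sum_const, nsmul_eq_mul] at hsum
    exact (mul_eq_zero.mp hsum).resolve_left
      (Nat.cast_ne_zero.mpr (Finset.card_pos.mpr ⟨i, Finset.mem_univ i⟩).ne')
  have hz : z = 0 := funext fun u => (hconst u).trans hzi
  exact (sub_eq_zero.mp hz).symm

theorem Connected.effectiveResistance_eq_sub_of_lapMatrix_mulVec (hG : G.Connected) {i j : V}
    {y : V → ℝ} (hy : G.lapMatrix ℝ *ᵥ y = Pi.single i 1 - Pi.single j 1) :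
    G.effectiveResistance i j = y i - y j := by
  set w : V → ℝ := Pi.single i 1 - Pi.single j 1
  calc G.effectiveResistance i j = (G.lapMatrix ℝ *ᵥ y) ⬝ᵥ (G.lapPinv *ᵥ w) := by
        rw [effectiveResistance, hy]
    _ = y ⬝ᵥ w := by
        rw [← dotProduct_lapMatrix_mulVec_comm, hG.lapMatrix_mulVec_lapPinv_mulVec]
    _ = y i - y j := by simp [w, dotProduct_sub]

theorem Connected.energy_eq_effectiveResistance (hG : G.Connected) {i j : V} {y : V → ℝ}
    (hy : G.lapMatrix ℝ *ᵥ y = Pi.single i 1 - Pi.single j 1) :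
    y ⬝ᵥ (G.lapMatrix ℝ *ᵥ y) = G.effectiveResistance i j := by
  rw [hG.effectiveResistance_eq_sub_of_lapMatrix_mulVec hy, hy]
  simp [dotProduct_sub]

theorem Connected.effectiveResistance_nonneg (hG : G.Connected) (i j : V) :
    0 ≤ G.effectiveResistance i j := by
  rw [← hG.energy_eq_effectiveResistance (hG.lapMatrix_mulVec_lapPinv_mulVec i j),
    dotProduct_lapMatrix_mulVec]
  exact Finset.sum_nonneg fun e _ => edgeEnergy_nonneg _ e

theorem Connected.effectiveResistance_le_dist (hG : G.Connected) (i j : V) :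
    G.effectiveResistance i j ≤ G.dist i j := by
  obtain ⟨p, hp, hlen⟩ := hG.exists_path_of_dist i j
  have hy := hG.lapMatrix_mulVec_lapPinv_mulVec i j
  have h := hp.isTrail.sq_sub_le_length_mul_energy (G.lapPinv *ᵥ (Pi.single i 1 - Pi.single j 1))
  rw [← hG.effectiveResistance_eq_sub_of_lapMatrix_mulVec hy,
    hG.energy_eq_effectiveResistance hy, hlen] at h
  nlinarith [hG.effectiveResistance_nonneg i j]

theorem Connected.effectiveResistance_lt_one_of_not_isBridge (hG : G.Connected) {a b : V}
    (hadj : G.Adj a b) (hnb : ¬ G.IsBridge s(a, b)) : G.effectiveResistance a b < 1 := by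
  set y := G.lapPinv *ᵥ (Pi.single a 1 - Pi.single b 1)
  have hy := hG.lapMatrix_mulVec_lapPinv_mulVec a b
  have hdiff : y a - y b = G.effectiveResistance a b :=
    (hG.effectiveResistance_eq_sub_of_lapMatrix_mulVec hy).symm
  have henergy : ∑ e ∈ G.edgeFinset, edgeEnergy y e = G.effectiveResistance a b := by
    rw [← dotProduct_lapMatrix_mulVec, hG.energy_eq_effectiveResistance hy]
  rw [← Finset.add_sum_erase _ _ (mem_edgeFinset.mpr ((mem_edgeSet G).mpr hadj))] at henergy
  have hle : G.effectiveResistance a b ≤ 1 := by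
    simpa [dist_eq_one_iff_adj.mpr hadj] using hG.effectiveResistance_le_dist a b
  refine hle.lt_of_ne fun hR => ?_
  have hflat : ∀ e ∈ G.edgeFinset.erase s(a, b), edgeEnergy y e = 0 := by
    refine (Finset.sum_eq_zero_iff_of_nonneg fun e _ => edgeEnergy_nonneg y e).mp ?_
    have : edgeEnergy y s(a, b) = 1 := by simp [edgeEnergy, hdiff, hR]
    linarith
  obtain ⟨p, hp⟩ : ∃ p : G.Walk a b, s(a, b) ∉ p.edges := by
    simpa [isBridge_iff_forall_walk_mem_edges] using hnb
  have hab : y a - y b = 0 := by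
    rw [← p.sum_darts_sub]
    refine List.sum_eq_zero fun t ht => ?_
    obtain ⟨d, hd, rfl⟩ := List.mem_map.mp ht
    have hde : d.edge ∈ p.edges := List.mem_map_of_mem hd
    have := hflat d.edge
      (Finset.mem_erase.mpr ⟨fun h => hp (h ▸ hde), mem_edgeFinset.mpr d.edge_mem⟩)
    simpa [edgeEnergy, Dart.edge] using this
  linarith

theorem IsTree.lapMatrix_mulVec_dist (hT : G.IsTree) (t v : V) :
    (G.lapMatrix ℝ *ᵥ fun u => (G.dist t u : ℝ)) v =
      if v = t then -(G.degree v : ℝ) else 2 - G.degree v := by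
  have hsum : (G.lapMatrix ℝ *ᵥ fun u => (G.dist t u : ℝ)) v =
      ∑ u ∈ G.neighborFinset v, ((G.dist t v : ℝ) - G.dist t u) := by
    rw [lapMatrix_mulVec_apply, Finset.sum_sub_distrib, Finset.sum_const,
      card_neighborFinset_eq_degree, nsmul_eq_mul]
  rw [hsum]
  split_ifs with hvt
  · subst hvt
    rw [Finset.sum_congr rfl fun u hu => by
      rw [dist_self, dist_eq_one_iff_adj.mpr ((mem_neighborFinset G v u).mp hu)]]
    simp
  · obtain ⟨w, hw, h⟩ := hT.dist_sub_dist_of_adj t hvt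
    rw [Finset.sum_congr rfl fun u hu => h u ((mem_neighborFinset G v u).mp hu)]
    simp only [Finset.sum_ite, Finset.filter_eq', (mem_neighborFinset G v w).mpr hw, ↓reduceIte,
      Finset.sum_const, Finset.card_singleton, one_smul, Finset.filter_ne',
      Finset.card_erase_of_mem, card_neighborFinset_eq_degree, nsmul_eq_mul,
      Nat.cast_sub ((G.degree_pos_iff_exists_adj v).mpr ⟨w, hw⟩)]
    ring

theorem IsTree.effectiveResistance_eq_dist (hT : G.IsTree) (i j : V) :
    G.effectiveResistance i j = G.dist i j := by
  set y : V → ℝ := fun u => ((G.dist j u : ℝ) - G.dist i u) / 2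
  have hy : G.lapMatrix ℝ *ᵥ y = Pi.single i 1 - Pi.single j 1 := by
    have : y = (1 / 2 : ℝ) • ((fun u => (G.dist j u : ℝ)) - fun u => (G.dist i u : ℝ)) := by
      ext u
      simp only [y, Pi.smul_apply, Pi.sub_apply, smul_eq_mul]
      ring
    ext v
    rw [this, mulVec_smul, mulVec_sub]
    simp only [Pi.smul_apply, Pi.sub_apply, hT.lapMatrix_mulVec_dist, Pi.single_apply, smul_eq_mul]
    split_ifs <;> ring
  rw [hT.connected.effectiveResistance_eq_sub_of_lapMatrix_mulVec hy]
  simp only [y, dist_self, dist_comm (u := j)]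
  push_cast
  ring

theorem Connected.forall_effectiveResistance_eq_dist_iff_isTree (hG : G.Connected) :
    (∀ i j, G.effectiveResistance i j = G.dist i j) ↔ G.IsTree := by
  refine ⟨fun h => ⟨hG, ?_⟩, fun hT => hT.effectiveResistance_eq_dist⟩
  rw [isAcyclic_iff_forall_adj_isBridge]
  intro a b hadj
  by_contra hnb
  have := hG.effectiveResistance_lt_one_of_not_isBridge hadj hnb
  rw [h, dist_eq_one_iff_adj.mpr hadj, Nat.cast_one] at this
  exact lt_irrefl _ this

end SimpleGraph

theorem Finset.sum_filter_lt_eq_sum_sum_div_two {α : Type*} [Fintype α] [LinearOrder α]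
    (f : α → α → ℝ) (hsymm : ∀ i j, f i j = f j i) (hdiag : ∀ i, f i i = 0) :
    ∑ p ∈ Finset.univ.filter (fun p : α × α => p.1 < p.2), f p.1 p.2 = (∑ i, ∑ j, f i j) / 2 := by
  have hsplit : ∀ p : α × α, f p.1 p.2 =
      (if p.1 < p.2 then f p.1 p.2 else 0) + (if p.2 < p.1 then f p.2 p.1 else 0) := by
    rintro ⟨i, j⟩
    rcases lt_trichotomy i j with h | rfl | h
    · simp [h, h.not_gt]
    · simp [hdiag]
    · simp [h, h.not_gt, hsymm i j]
  have hswap : ∑ p : α × α, (if p.2 < p.1 then f p.2 p.1 else 0) =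
      ∑ p : α × α, (if p.1 < p.2 then f p.1 p.2 else 0) :=
    Fintype.sum_equiv (Equiv.prodComm α α) _ _ fun _ => rfl
  rw [Finset.sum_filter, ← Fintype.sum_prod_type', Finset.sum_congr rfl fun p _ => hsplit p,
    Finset.sum_add_distrib, hswap]
  ring

theorem distSum_eq_sum_sum_div_two {n : ℕ} (G : SimpleGraph (Fin n)) :
    distSum G = (∑ i, ∑ j, (G.dist i j : ℝ)) / 2 :=
  Finset.sum_filter_lt_eq_sum_sum_div_two (fun i j => (G.dist i j : ℝ))
    (fun i j => by rw [SimpleGraph.dist_comm]) fun i => by rw [SimpleGraph.dist_self, Nat.cast_zero]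

theorem Hstar_eq_sum_sum_effectiveResistance {n : ℕ} (G : SimpleGraph (Fin n))
    [hdec : DecidableRel G.Adj] :
    Hstar G = (∑ i, ∑ j, G.effectiveResistance i j) / (4 * n ^ 2) := by
  obtain rfl := Subsingleton.elim hdec (Classical.decRel G.Adj)
  let := Classical.decRel G.Adj
  rw [G.sum_sum_effectiveResistance, SimpleGraph.lapPinv,
    (G.isHermitian_lapMatrix ℝ).trace_cfc, Hstar, Fintype.card_fin]
  change _ = (2 * n * ∑ i, (lapEigs G i)⁻¹) / _
  rcases eq_or_ne (n : ℝ) 0 with hn | hn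
  · simp [hn]
  · field_simp
    ring

theorem avgDist_mul_div_eq_sum_sum_dist {n : ℕ} (hn : 2 ≤ n) (G : SimpleGraph (Fin n)) :
    avgDist G * ((n : ℝ) - 1) / (4 * n) = (∑ i, ∑ j, (G.dist i j : ℝ)) / (4 * n ^ 2) := by
  have hn' : (2 : ℝ) ≤ n := by exact_mod_cast hn
  have h1 : (n : ℝ) - 1 ≠ 0 := by linarith
  have h2 : (n : ℝ) ^ 2 - n ≠ 0 := by nlinarith
  rw [avgDist, distSum_eq_sum_sum_div_two]
  field_simp

/-- `H*(G) ≤ δ̃(G)(n-1)/(4n)`, with equality iff `G` is a tree. -/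
theorem stmt_10 {n : ℕ} (hn : 2 ≤ n) (G : SimpleGraph (Fin n)) (hG : G.Connected) :
    Hstar G ≤ avgDist G * ((n : ℝ) - 1) / (4 * (n : ℝ)) ∧
    (Hstar G = avgDist G * ((n : ℝ) - 1) / (4 * (n : ℝ)) ↔ G.IsTree) := by
  classical
  have hle : ∀ p : Fin n × Fin n, G.effectiveResistance p.1 p.2 ≤ G.dist p.1 p.2 :=
    fun p => hG.effectiveResistance_le_dist p.1 p.2
  have hpos : (0 : ℝ) < 4 * n ^ 2 := by positivity
  rw [Hstar_eq_sum_sum_effectiveResistance, avgDist_mul_div_eq_sum_sum_dist hn,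
    div_le_div_iff_of_pos_right hpos, div_left_inj' hpos.ne', ← Fintype.sum_prod_type',
    ← Fintype.sum_prod_type',
    Finset.sum_eq_sum_iff_of_le fun p _ => hle p,
    ← hG.forall_effectiveResistance_eq_dist_iff_isTree]
  exact ⟨Finset.sum_le_sum fun p _ => hle p, by simp [Prod.forall]⟩
end

section
/- Let G be a connected k-regular graph on n vertices whose algebraic connectivity satisfies λ₂(L) ≥ k - 2√(k-1) - ε for some ε ∈ (0, k - 2√(k-1)). Then H*(G) / min{H*(G') : G' connected on n vertices with average degree k} ≤ (k·n)/((n-1)(k - 2√(k-1) - ε)). -/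
open Finset Matrix Filter

/-! Apart from `λ₁ = 0`, every Laplacian eigenvalue of `G` is at least `λ₂ ≥ k - 2√(k-1) - ε`,
so `H*(G) ≤ (n-1)/(2nλ₂)`. For a connected `G'` of average degree `k`, the `n - 1` nonzero
eigenvalues sum to the trace `kn`, so the HM–AM (Cauchy–Schwarz) inequality gives
`∑ 1/λᵢ ≥ (n-1)²/(kn)`, i.e. `H*(G') ≥ (n-1)²/(2kn²)`. Since `G` itself is such a graph, the
infimum is positive and at least this bound; the quotient of the two bounds is the claim. -/

theorem sq_card_ne_zero_div_sum_le_sum_inv {ι : Type*} [Fintype ι] {f : ι → ℝ}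
    (hf : ∀ i, 0 ≤ f i) : (#{i | f i ≠ 0} : ℝ) ^ 2 / ∑ i, f i ≤ ∑ i, (f i)⁻¹ := by
  have hpos : ∀ i ∈ ({i | f i ≠ 0} : Finset ι), 0 < f i := fun i hi =>
    (hf i).lt_of_ne' (mem_filter.mp hi).2
  calc (#{i | f i ≠ 0} : ℝ) ^ 2 / ∑ i, f i
      = (∑ i ∈ {i | f i ≠ 0}, (1 : ℝ)) ^ 2 / ∑ i ∈ {i | f i ≠ 0}, f i := by
        rw [sum_filter_ne_zero]; simp
    _ ≤ ∑ i ∈ {i | f i ≠ 0}, 1 ^ 2 / f i := sq_sum_div_le_sum_sq_div _ _ hpos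
    _ = ∑ i, (f i)⁻¹ := by
        rw [sum_filter_of_ne fun i _ hi => by simpa using hi]; simp

theorem sum_inv_le_of_monotone {n : ℕ} {g : Fin n → ℝ} (hg : Monotone g) (h1 : 1 < n)
    (h0 : g ⟨0, by omega⟩ = 0) {β : ℝ} (hβ : 0 < β) (hβg : β ≤ g ⟨1, h1⟩) :
    ∑ i, (g i)⁻¹ ≤ ((n : ℝ) - 1) / β := by
  obtain ⟨m, rfl⟩ : ∃ m, n = m + 1 := ⟨n - 1, by omega⟩
  have hsucc : ∀ i : Fin m, (g i.succ)⁻¹ ≤ β⁻¹ := fun i =>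
    inv_anti₀ hβ (hβg.trans (hg (Fin.le_def.mpr (by simp))))
  calc ∑ i, (g i)⁻¹ = ∑ i : Fin m, (g i.succ)⁻¹ := by
        rw [Fin.sum_univ_succ, show g 0 = 0 from h0, _root_.inv_zero, zero_add]
    _ ≤ ∑ _i : Fin m, β⁻¹ := sum_le_sum fun i _ => hsucc i
    _ = ((m + 1 : ℕ) - 1 : ℝ) / β := by simp [div_eq_mul_inv]

theorem lapEigs_nonneg {n : ℕ} (G : SimpleGraph (Fin n)) (i : Fin n) : 0 ≤ lapEigs G i :=
  let := Classical.decRel G.Adj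
  (SimpleGraph.posSemidef_lapMatrix ℝ G).eigenvalues_nonneg i

theorem sum_lapEigs_eq_avgDeg_mul {n : ℕ} (G : SimpleGraph (Fin n)) :
    ∑ i, lapEigs G i = avgDeg G * n := by
  let := Classical.decRel G.Adj
  have htrace := (SimpleGraph.posSemidef_lapMatrix ℝ G).isHermitian.trace_eq_sum_eigenvalues
  simp only [RCLike.ofReal_real_eq_id, id] at htrace
  rcases Nat.eq_zero_or_pos n with rfl | hn
  · simp
  rw [lapEigs, ← htrace, avgDeg, Fintype.card_fin, div_mul_cancel₀ _ (by positivity)]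
  simp [SimpleGraph.lapMatrix, SimpleGraph.degMatrix, Matrix.trace_diagonal]

theorem card_lapEigs_ne_zero_add_card_connectedComponent {n : ℕ} (G : SimpleGraph (Fin n)) :
    #{i | lapEigs G i ≠ 0} + Nat.card G.ConnectedComponent = n := by
  let := Classical.decRel G.Adj
  have hrank := (SimpleGraph.posSemidef_lapMatrix ℝ G).isHermitian.rank_eq_card_non_zero_eigs
  rw [Fintype.card_subtype] at hrank
  rw [lapEigs, ← hrank, Nat.card_eq_fintype_card,
    G.card_connectedComponent_eq_finrank_ker_toLin'_lapMatrix, Matrix.rank,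
    Matrix.toLin'_apply', LinearMap.finrank_range_add_finrank_ker, Module.finrank_fin_fun]

theorem sortedLapEigs_monotone {n : ℕ} (G : SimpleGraph (Fin n)) : Monotone (sortedLapEigs G) :=
  Tuple.monotone_sort _

theorem sum_inv_sortedLapEigs {n : ℕ} (G : SimpleGraph (Fin n)) :
    ∑ i, (sortedLapEigs G i)⁻¹ = ∑ i, (lapEigs G i)⁻¹ :=
  Equiv.sum_comp (Tuple.sort (lapEigs G)) fun i => (lapEigs G i)⁻¹

theorem exists_lapEigs_eq_zero {n : ℕ} (G : SimpleGraph (Fin n)) (hn : 0 < n) :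
    ∃ i, lapEigs G i = 0 := by
  let := Classical.decRel G.Adj
  have hdet : (G.lapMatrix ℝ).det = 0 := Matrix.exists_mulVec_eq_zero_iff.mp
    ⟨fun _ => 1, fun h => by simpa using congrFun h ⟨0, hn⟩, G.lapMatrix_mulVec_const_eq_zero⟩
  rw [(SimpleGraph.posSemidef_lapMatrix ℝ G).isHermitian.det_eq_prod_eigenvalues] at hdet
  obtain ⟨i, -, hi⟩ := prod_eq_zero_iff.mp hdet
  exact ⟨i, by exact_mod_cast hi⟩

theorem sortedLapEigs_zero {n : ℕ} (G : SimpleGraph (Fin n)) (hn : 0 < n) :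
    sortedLapEigs G ⟨0, hn⟩ = 0 := by
  obtain ⟨j, hj⟩ := exists_lapEigs_eq_zero G hn
  have hle : sortedLapEigs G ⟨0, hn⟩ ≤ sortedLapEigs G ((Tuple.sort (lapEigs G)).symm j) :=
    sortedLapEigs_monotone G (Fin.le_def.mpr (Nat.zero_le _))
  simp only [sortedLapEigs, Function.comp_apply, Equiv.apply_symm_apply, hj] at hle
  exact hle.antisymm (lapEigs_nonneg G _)

theorem Hstar_le_of_le_sortedLapEigs_one {n : ℕ} (G : SimpleGraph (Fin n)) (h1 : 1 < n)
    {β : ℝ} (hβ : 0 < β) (hβ₂ : β ≤ sortedLapEigs G ⟨1, h1⟩) :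
    Hstar G ≤ ((n : ℝ) - 1) / (2 * n * β) := by
  have hsum := sum_inv_le_of_monotone (sortedLapEigs_monotone G) h1
    (sortedLapEigs_zero G (by omega)) hβ hβ₂
  rw [sum_inv_sortedLapEigs] at hsum
  calc Hstar G ≤ 1 / (2 * n) * (((n : ℝ) - 1) / β) := by
        unfold Hstar; gcongr
    _ = ((n : ℝ) - 1) / (2 * n * β) := by ring

theorem le_Hstar_of_connected {n : ℕ} (G : SimpleGraph (Fin n)) (hG : G.Connected) :
    ((n : ℝ) - 1) ^ 2 / (2 * avgDeg G * n ^ 2) ≤ Hstar G := by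
  have hcard : (#{i | lapEigs G i ≠ 0} : ℝ) = n - 1 := by
    have := card_lapEigs_ne_zero_add_card_connectedComponent G
    rw [Nat.card_eq_one_iff_unique.mpr ⟨hG.preconnected.subsingleton_connectedComponent,
      ⟨G.connectedComponentMk hG.nonempty.some⟩⟩] at this
    rw [eq_sub_iff_add_eq]; exact_mod_cast this
  have hcs := sq_card_ne_zero_div_sum_le_sum_inv (lapEigs_nonneg G)
  rw [hcard, sum_lapEigs_eq_avgDeg_mul] at hcs
  calc ((n : ℝ) - 1) ^ 2 / (2 * avgDeg G * n ^ 2)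
      = 1 / (2 * n) * (((n : ℝ) - 1) ^ 2 / (avgDeg G * n)) := by ring
    _ ≤ Hstar G := by unfold Hstar; gcongr

theorem avgDeg_eq_of_isRegularOfDegree {V : Type*} [Fintype V] [Nonempty V] {G : SimpleGraph V}
    [DecidableRel G.Adj] {k : ℕ} (hG : G.IsRegularOfDegree k) : avgDeg G = k := by
  have hdeg : ∀ v, (letI := Classical.decRel G.Adj; G.degree v) = k := fun v => by
    convert hG v
  simp only [avgDeg, hdeg, sum_const, card_univ, nsmul_eq_mul]
  field_simp

/-- for a connected `k`-regular graph with
`λ₂ ≥ k - 2√(k-1) - ε`, the ratio of `H*(G)` to the minimum of `H*` over connected graphs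
on `n` vertices with average degree `k` is at most `kn/((n-1)(k - 2√(k-1) - ε))`. -/
theorem stmt_17 {n k : ℕ} (hn : 2 ≤ n) (G : SimpleGraph (Fin n))
    (hG : G.Connected) (hreg : letI := Classical.decRel G.Adj; G.IsRegularOfDegree k) (ε : ℝ)
    (hε : ε ∈ Set.Ioo 0 ((k : ℝ) - 2 * Real.sqrt ((k : ℝ) - 1)))
    (hlam : (k : ℝ) - 2 * Real.sqrt ((k : ℝ) - 1) - ε ≤ sortedLapEigs G ⟨1, by omega⟩) :
    Hstar G /
      sInf {x : ℝ | ∃ G' : SimpleGraph (Fin n), G'.Connected ∧ avgDeg G' = k ∧ Hstar G' = x}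
      ≤ ((k : ℝ) * n) / (((n : ℝ) - 1) * ((k : ℝ) - 2 * Real.sqrt ((k : ℝ) - 1) - ε)) := by
  set β := (k : ℝ) - 2 * Real.sqrt ((k : ℝ) - 1) - ε
  have hβ : 0 < β := sub_pos.mpr hε.2
  have hk : (0 : ℝ) < k := by linarith [hε.1, Real.sqrt_nonneg ((k : ℝ) - 1)]
  have hn1 : (0 : ℝ) < n - 1 := by
    have : (2 : ℝ) ≤ n := by exact_mod_cast hn
    linarith
  have hmin : ((n : ℝ) - 1) ^ 2 / (2 * k * n ^ 2) ≤
      sInf {x : ℝ | ∃ G' : SimpleGraph (Fin n), G'.Connected ∧ avgDeg G' = k ∧ Hstar G' = x} := by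
    refine le_csInf ⟨Hstar G, G, hG, ?_, rfl⟩ ?_
    · have := hG.nonempty
      let := Classical.decRel G.Adj
      exact avgDeg_eq_of_isRegularOfDegree hreg
    · rintro _ ⟨G', hG', hd, rfl⟩
      simpa only [hd] using le_Hstar_of_connected G' hG'
  calc _ ≤ (((n : ℝ) - 1) / (2 * n * β)) / (((n : ℝ) - 1) ^ 2 / (2 * k * n ^ 2)) :=
        div_le_div₀ (by positivity) (Hstar_le_of_le_sortedLapEigs_one G (by omega) hβ hlam)
          (by positivity) hmin
    _ = _ := by field_simp
end

section
/- For every constant α > 1 there exists a sequence {Gₙ} of connected undirected graphs on n vertices such that liminf d̃(Gₙ)/(n-1) ≥ 1/α while H*(Gₙ) → ∞ as n → ∞. In particular, the lollipop graph (complete graph on ⌈n/β⌉ vertices with a path on the remaining vertices attached by one edge, β = α^{1/3}) has this property. -/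
/-!
Take the lollipop graph on `n` vertices with a tail of `2h` vertices, `h = ⌊n / K⌋` for a large
constant `K`. Its clique alone gives average degree at least `(1 - 6 / K) (n - 1)`.

For `H*`, expand a vector `x ⊥ 𝟙` in an orthonormal eigenbasis of the Laplacian `L`: with
coefficients `cᵢ`, `‖x‖² = ∑ (λᵢ cᵢ²) / λᵢ ≤ (xᵀ L x) ∑ 1 / λᵢ`, because `cᵢ = 0` when `λᵢ = 0` (the
graph is connected) and `λᵢ cᵢ² ≤ xᵀ L x`. The centred vector that is constant on the clique and
grows by one along the tail has `xᵀ L x ≤ n` and `‖x‖² ≥ h³ / 4`, whence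
`H* ≥ h³ / (8 n²) ≥ n / (64 K³) → ∞`.
-/

open Finset Matrix Filter

theorem mul_sq_le_sum_sq_sub_of_separated {ι : Type*} [Fintype ι] (y : ι → ℝ) (t : ℝ)
    {A B : Finset ι} {a b k : ℝ} (hA : k ≤ #A) (hB : k ≤ #B) (ha : ∀ i ∈ A, y i ≤ a)
    (hb : ∀ i ∈ B, b ≤ y i) (hab : a ≤ b) :
    k * ((b - a) / 2) ^ 2 ≤ ∑ i, (y i - t) ^ 2 := by
  have bound_on (S : Finset ι) (hk : k ≤ #S) (hS : ∀ i ∈ S, ((b - a) / 2) ^ 2 ≤ (y i - t) ^ 2) :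
      k * ((b - a) / 2) ^ 2 ≤ ∑ i, (y i - t) ^ 2 :=
    calc k * ((b - a) / 2) ^ 2 ≤ #S * ((b - a) / 2) ^ 2 := by gcongr
      _ ≤ ∑ i ∈ S, (y i - t) ^ 2 := by simpa using card_nsmul_le_sum S _ _ hS
      _ ≤ ∑ i, (y i - t) ^ 2 :=
        sum_le_sum_of_subset_of_nonneg (subset_univ S) fun _ _ _ => sq_nonneg _
  -- `t` is at distance at least `(b - a) / 2` from one of the two sides
  rcases le_total t ((a + b) / 2) with ht | ht
  · refine bound_on B hB fun i hi => ?_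
    nlinarith [hb i hi]
  · refine bound_on A hA fun i hi => ?_
    nlinarith [ha i hi]

theorem Matrix.PosSemidef.dotProduct_self_le_mul_sum_inv_eigenvalues {ι : Type*} [Fintype ι]
    [DecidableEq ι] {A : Matrix ι ι ℝ} (hA : A.PosSemidef) {x : ι → ℝ}
    (hx : ∀ y, A *ᵥ y = 0 → y ⬝ᵥ x = 0) :
    x ⬝ᵥ x ≤ x ⬝ᵥ (A *ᵥ x) * ∑ i, (hA.isHermitian.eigenvalues i)⁻¹ := by
  set b := hA.isHermitian.eigenvectorBasis
  set μ := hA.isHermitian.eigenvalues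
  set c : ι → ℝ := fun i => b i ⬝ᵥ x
  have hsymm : Aᵀ = A := by
    simpa only [conjTranspose_eq_transpose_of_trivial] using hA.isHermitian.eq
  have hAb (i : ι) : A *ᵥ b i = μ i • b i := hA.isHermitian.mulVec_eigenvectorBasis i
  have expand (y : ι → ℝ) : x ⬝ᵥ y = ∑ i, c i * (b i ⬝ᵥ y) := by
    have := b.sum_inner_mul_inner (WithLp.toLp 2 x) (WithLp.toLp 2 y)
    simp only [EuclideanSpace.inner_eq_star_dotProduct, star_trivial] at this
    simpa [c, dotProduct_comm] using this.symm
  have hquad : x ⬝ᵥ (A *ᵥ x) = ∑ i, μ i * c i ^ 2 := by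
    rw [expand]
    refine sum_congr rfl fun i _ => ?_
    rw [dotProduct_mulVec, ← mulVec_transpose, hsymm, hAb, smul_dotProduct, smul_eq_mul]
    ring
  have hker (i : ι) (hi : μ i = 0) : c i = 0 := hx _ (by rw [hAb, hi, zero_smul])
  -- with `0⁻¹ = 0` this also holds on the kernel, where `c i = 0`
  have hsq : x ⬝ᵥ x = ∑ i, μ i * c i ^ 2 * (μ i)⁻¹ := by
    rw [expand]
    refine sum_congr rfl fun i _ => ?_
    by_cases hi : μ i = 0
    · simp [hker i hi, hi]
    · field_simp
      ring
  rw [hsq, hquad, mul_sum]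
  refine sum_le_sum fun i _ =>
    mul_le_mul_of_nonneg_right ?_ (inv_nonneg.2 (hA.eigenvalues_nonneg i))
  exact single_le_sum (f := fun j => μ j * c j ^ 2)
    (fun j _ => mul_nonneg (hA.eigenvalues_nonneg j) (sq_nonneg _)) (mem_univ i)

theorem avgDeg_le_card_sub_one {V : Type*} [Fintype V] [Nonempty V] (G : SimpleGraph V) :
    avgDeg G ≤ Fintype.card V - 1 := by
  classical
  unfold avgDeg
  rw [div_le_iff₀ (by positivity)]
  calc ∑ v, (G.degree v : ℝ) ≤ ∑ _v : V, ((Fintype.card V : ℝ) - 1) := by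
        refine sum_le_sum fun v _ => ?_
        have := G.degree_lt_card_verts v
        rw [le_sub_iff_add_le]
        exact_mod_cast this
    _ = _ := by
        simp only [sum_const, card_univ, nsmul_eq_mul]
        ring

theorem avgDeg_div_card_sub_one_le_one {V : Type*} [Fintype V] (G : SimpleGraph V) :
    avgDeg G / ((Fintype.card V : ℝ) - 1) ≤ 1 := by
  rcases isEmpty_or_nonempty V with hV | hV
  · simp [avgDeg]
  · exact div_le_one_of_le₀ (avgDeg_le_card_sub_one G)
      (sub_nonneg.2 (by exact_mod_cast Fintype.card_pos))

theorem exists_three_le_and_six_div_lt {ε : ℝ} (hε : 0 < ε) (hε₁ : ε ≤ 1) :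
    ∃ K : ℕ, 3 ≤ K ∧ 6 / (K : ℝ) < ε := by
  obtain ⟨K, hK⟩ := exists_nat_gt (6 / ε)
  have hK₀ : (0 : ℝ) < K := (div_pos (by norm_num) hε).trans hK
  have hεK : 6 < ε * K := by rwa [div_lt_iff₀' hε] at hK
  refine ⟨K, ?_, by rwa [div_lt_iff₀ hK₀]⟩
  exact_mod_cast (by nlinarith : (3 : ℝ) ≤ K)

namespace SimpleGraph

theorem dotProduct_self_le_mul_sum_inv_lapEigs {n : ℕ} {G : SimpleGraph (Fin n)}
    [DecidableRel G.Adj] (hG : G.Connected) {x : Fin n → ℝ} (hx : ∑ v, x v = 0) :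
    x ⬝ᵥ x ≤ x ⬝ᵥ (G.lapMatrix ℝ *ᵥ x) * ∑ i, (lapEigs G i)⁻¹ := by
  -- `lapEigs` is built from the Laplacian for the classical decidability instance
  obtain rfl : ‹DecidableRel G.Adj› = Classical.decRel G.Adj := Subsingleton.elim _ _
  let _ : DecidableRel G.Adj := Classical.decRel G.Adj
  refine (posSemidef_lapMatrix ℝ G).dotProduct_self_le_mul_sum_inv_eigenvalues fun y hy => ?_
  obtain ⟨v₀⟩ := hG.nonempty
  have hconst (v : Fin n) : y v = y v₀ :=
    (lapMatrix_mulVec_eq_zero_iff_forall_reachable G).1 hy v v₀ (hG.preconnected v v₀)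
  simp only [dotProduct, hconst, ← mul_sum, hx, mul_zero]

theorem dotProduct_lapMatrix_mulVec_le {V : Type*} [Fintype V] [DecidableEq V] {G H : SimpleGraph V}
    [DecidableRel G.Adj] [DecidableRel H.Adj] {x : V → ℝ}
    (hx : ∀ i j, G.Adj i j → x i ≠ x j → H.Adj i j ∧ (x i - x j) ^ 2 ≤ 1) :
    x ⬝ᵥ (G.lapMatrix ℝ *ᵥ x) ≤ (∑ v, H.degree v : ℝ) / 2 := by
  rw [← toLinearMap₂'_apply', lapMatrix_toLinearMap₂']
  gcongr with i _
  have hdeg : (H.degree i : ℝ) = ∑ j, if H.Adj i j then 1 else 0 := by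
    simp [sum_boole, ← card_neighborFinset_eq_degree, neighborFinset_eq_filter]
  rw [hdeg]
  refine sum_le_sum fun j _ => ?_
  by_cases hij : G.Adj i j ∧ x i ≠ x j
  · simp [hij.1, hx i j hij.1 hij.2]
  · rw [not_and_not_right] at hij
    split_ifs <;> simp_all

theorem pathGraph_degree_le_two {n : ℕ} (v : Fin n) [Fintype ((pathGraph n).neighborSet v)] :
    (pathGraph n).degree v ≤ 2 := by
  classical
  calc (pathGraph n).degree v ≤ #({v.val + 1, v.val - 1} : Finset ℕ) := by
        refine card_le_card_of_injOn Fin.val (fun w hw => ?_) Fin.val_injective.injOn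
        rw [mem_coe, mem_neighborFinset, pathGraph_adj] at hw
        simp only [coe_insert, coe_singleton, Set.mem_insert_iff, Set.mem_singleton_iff]
        omega
    _ ≤ 2 := card_le_two

/-- The complete graph on `{0, …, m - 1}` with the path `m - 1, m, …, n - 1` attached; the path
is taken through all of `Fin n`, its edges inside the clique being redundant. -/
def lollipop (n m : ℕ) : SimpleGraph (Fin n) :=
  pathGraph n ⊔ fromRel fun i j => i.val < m ∧ j.val < m

theorem lollipop_connected {n : ℕ} (m : ℕ) (hn : 1 ≤ n) : (lollipop n m).Connected := by
  obtain ⟨k, rfl⟩ := Nat.exists_eq_add_of_le' hn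
  exact (pathGraph_connected k).mono le_sup_left

theorem le_degree_lollipop {n m : ℕ} (hm : m ≤ n) {v : Fin n} (hv : v.val < m)
    [Fintype ((lollipop n m).neighborSet v)] : m - 1 ≤ (lollipop n m).degree v := by
  classical
  calc m - 1 = #(({w : Fin n | w.val < m} : Finset (Fin n)).erase v) := by
        rw [card_erase_of_mem (by simpa), Fin.card_filter_val_lt, min_eq_right hm]
    _ ≤ (lollipop n m).degree v := by
        rw [← card_neighborFinset_eq_degree]
        refine card_le_card fun w hw => ?_
        simp only [mem_erase, mem_filter, mem_univ, true_and] at hw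
        rw [mem_neighborFinset]
        exact Or.inr ⟨hw.1.symm, Or.inl ⟨hv, hw.2⟩⟩

theorem mul_sub_one_div_le_avgDeg_lollipop {n m : ℕ} (hm : m ≤ n) :
    (m : ℝ) * (m - 1) / n ≤ avgDeg (lollipop n m) := by
  classical
  unfold avgDeg
  rw [Fintype.card_fin]
  gcongr
  calc (m : ℝ) * (m - 1) = ∑ _v ∈ ({v : Fin n | v.val < m} : Finset (Fin n)), ((m : ℝ) - 1) := by
        simp only [sum_const, Fin.card_filter_val_lt, min_eq_right hm, nsmul_eq_mul]
    _ ≤ ∑ v ∈ ({v : Fin n | v.val < m} : Finset (Fin n)), ((lollipop n m).degree v : ℝ) := by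
        refine sum_le_sum fun v hv => ?_
        have := le_degree_lollipop hm (mem_filter.1 hv).2
        rw [sub_le_iff_le_add]
        exact_mod_cast Nat.le_add_of_sub_le this
    _ ≤ ∑ v, ((lollipop n m).degree v : ℝ) :=
        sum_le_sum_of_subset_of_nonneg (subset_univ _) fun _ _ _ => by positivity

theorem cube_div_four_le_mul_sum_inv_lapEigs_lollipop {n h : ℕ} (hn : 1 ≤ n) (hh : 3 * h ≤ n) :
    (h : ℝ) ^ 3 / 4 ≤ n * ∑ i, (lapEigs (lollipop n (n - 2 * h)) i)⁻¹ := by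
  classical
  set m := n - 2 * h
  set y : Fin n → ℝ := fun v => max (v.val : ℝ) m
  set t : ℝ := (∑ v, y v) / n
  set x : Fin n → ℝ := fun v => y v - t
  have hsum : ∑ v, x v = 0 := by
    simp only [x, t, sum_sub_distrib, sum_const, card_univ, Fintype.card_fin, nsmul_eq_mul]
    field_simp
    ring
  have hspread : (h : ℝ) * (((m + h : ℝ) - m) / 2) ^ 2 ≤ x ⬝ᵥ x := by
    refine (mul_sq_le_sum_sq_sub_of_separated y t (A := {v | v.val < m}) (B := {v | m + h ≤ v.val})
      ?_ ?_ ?_ ?_ (by simp)).trans_eq (by simp [dotProduct, x, sq])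
    · simp [Fin.card_filter_val_lt, m]
      omega
    · have := card_filter_add_card_filter_not (s := univ) fun v : Fin n => v.val < m + h
      simp only [Fin.card_filter_val_lt, not_lt, card_univ, Fintype.card_fin] at this
      simp only [Nat.cast_le]
      omega
    · intro v hv
      exact max_le (mod_cast (mem_filter.1 hv).2.le) le_rfl
    · intro v hv
      exact le_max_of_le_left (mod_cast (mem_filter.1 hv).2)
  have hquad : x ⬝ᵥ ((lollipop n m).lapMatrix ℝ *ᵥ x) ≤ n := by
    refine (dotProduct_lapMatrix_mulVec_le (H := pathGraph n) fun i j hij hne => ?_).trans ?_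
    · rcases hij with hpath | ⟨-, hclique⟩
      · refine ⟨hpath, ?_⟩
        rw [pathGraph_adj] at hpath
        have hstep : |(i.val : ℝ) - j.val| = 1 := by
          rcases hpath with h | h <;> simp [← h]
        rw [sq_le_one_iff_abs_le_one, sub_sub_sub_cancel_right, ← hstep]
        exact abs_max_sub_max_le_abs _ _ _
      · have hclique' : i.val < m ∧ j.val < m := by tauto
        exact absurd (by simp [x, y, hclique'.1.le, hclique'.2.le]) hne
    · calc (∑ v, ((pathGraph n).degree v : ℝ)) / 2 ≤ (∑ _v : Fin n, (2 : ℝ)) / 2 := by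
            gcongr with v
            exact_mod_cast pathGraph_degree_le_two v
        _ = n := by simp
  calc (h : ℝ) ^ 3 / 4 ≤ x ⬝ᵥ x := by linear_combination hspread
    _ ≤ x ⬝ᵥ ((lollipop n m).lapMatrix ℝ *ᵥ x) * ∑ i, (lapEigs (lollipop n m) i)⁻¹ :=
        dotProduct_self_le_mul_sum_inv_lapEigs (lollipop_connected m hn) hsum
    _ ≤ n * ∑ i, (lapEigs (lollipop n m) i)⁻¹ := by
        gcongr
        exact sum_nonneg fun i _ => inv_nonneg.2 ((posSemidef_lapMatrix ℝ _).eigenvalues_nonneg i)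

theorem cube_div_le_Hstar_lollipop {n h : ℕ} (hn : 1 ≤ n) (hh : 3 * h ≤ n) :
    (h : ℝ) ^ 3 / (8 * n ^ 2) ≤ Hstar (lollipop n (n - 2 * h)) := by
  have hn' : (0 : ℝ) < n := by exact_mod_cast hn
  unfold Hstar
  calc (h : ℝ) ^ 3 / (8 * n ^ 2) = (h : ℝ) ^ 3 / 4 / (2 * n ^ 2) := by ring
    _ ≤ ((n : ℝ) * ∑ i, (lapEigs (lollipop n (n - 2 * h)) i)⁻¹) / (2 * n ^ 2) := by
        gcongr
        exact cube_div_four_le_mul_sum_inv_lapEigs_lollipop hn hh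
    _ = _ := by field_simp

theorem div_le_Hstar_lollipop {K n : ℕ} (hK : 3 ≤ K) (hn : K ≤ n) :
    (n : ℝ) / (64 * K ^ 3) ≤ Hstar (lollipop n (n - 2 * (n / K))) := by
  set h := n / K
  have hK' : (0 : ℝ) < K := by positivity
  have h3 : 3 * h ≤ n := (Nat.mul_le_mul_right h hK).trans (Nat.mul_div_le n K)
  -- `n < K (h + 1) ≤ 2 K h` since `h ≥ 1`
  have hhalf : (n : ℝ) / (2 * K) ≤ h := by
    have hlt : n < K * (h + 1) := Nat.lt_mul_div_succ n (by omega)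
    have hpos : 1 ≤ h := (Nat.one_le_div_iff (by omega)).2 hn
    rw [div_le_iff₀ (by linarith)]
    have : (n : ℝ) < K * (h + 1) := by exact_mod_cast hlt
    have : (1 : ℝ) ≤ h := by exact_mod_cast hpos
    nlinarith
  have hn' : (0 : ℝ) < n := by exact_mod_cast (show 0 < n by omega)
  calc (n : ℝ) / (64 * K ^ 3) = ((n : ℝ) / (2 * K)) ^ 3 / (8 * n ^ 2) := by
        field_simp
        ring
    _ ≤ (h : ℝ) ^ 3 / (8 * n ^ 2) := by gcongr
    _ ≤ _ := cube_div_le_Hstar_lollipop (by omega) h3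

theorem one_sub_six_div_le_avgDeg_lollipop {K n : ℕ} (hK : 3 ≤ K) (hn : 2 ≤ n) :
    1 - 6 / K ≤ avgDeg (lollipop n (n - 2 * (n / K))) / (n - 1) := by
  set m := n - 2 * (n / K)
  set r : ℝ := 2 / K
  have hK' : (3 : ℝ) ≤ K := by exact_mod_cast hK
  have hn' : (2 : ℝ) ≤ n := by exact_mod_cast hn
  have hr : 0 < r ∧ r ≤ 2 / 3 := ⟨by positivity, by rw [div_le_div_iff₀] <;> linarith⟩
  have hm : (n : ℝ) * (1 - r) ≤ m := by
    have h2 : 2 * (n / K) ≤ n := (Nat.mul_le_mul_right _ (by omega)).trans (Nat.mul_div_le n K)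
    have := Nat.cast_div_le (α := ℝ) (m := n) (n := K)
    rw [Nat.cast_sub h2]
    push_cast
    linarith [show (n : ℝ) * r = 2 * (n / K) by ring]
  rw [le_div_iff₀ (by linarith)]
  refine le_trans ?_ (mul_sub_one_div_le_avgDeg_lollipop (Nat.sub_le _ _))
  rw [le_div_iff₀ (by linarith), show (6 : ℝ) / K = 3 * r by ring]
  -- `m (m - 1) ≥ M (M - 1) ≥ (1 - 3r) n (n - 1)` for `M = n (1 - r)`
  nlinarith [mul_nonneg (sub_nonneg.2 hm) (show (0 : ℝ) ≤ m + n * (1 - r) - 1 by nlinarith),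
    mul_nonneg (mul_nonneg hr.1.le (by linarith : (0 : ℝ) ≤ n))
      (show (0 : ℝ) ≤ n + n * r - 2 by nlinarith)]

end SimpleGraph

/-- for every `α > 1` there is a sequence of connected graphs `Gₙ` on `n`
vertices whose normalized average degree satisfies `liminf d̃(Gₙ)/(n-1) ≥ 1/α` while
`H*(Gₙ) → ∞`. -/
theorem stmt_19 (α : ℝ) (hα : 1 < α) :
    ∃ G : ∀ n : ℕ, SimpleGraph (Fin n),
      (∀ n, 1 ≤ n → (G n).Connected) ∧
      1 / α ≤ liminf (fun n : ℕ => avgDeg (G n) / ((n : ℝ) - 1)) atTop ∧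
      Tendsto (fun n => Hstar (G n)) atTop atTop := by
  obtain ⟨K, hK3, hK⟩ := exists_three_le_and_six_div_lt
    (sub_pos.2 ((div_lt_one (by linarith)).2 hα)) (sub_le_self _ (by positivity))
  refine ⟨fun n => SimpleGraph.lollipop n (n - 2 * (n / K)),
    fun n hn => SimpleGraph.lollipop_connected _ hn, ?_, ?_⟩
  · refine le_liminf_of_le (isCoboundedUnder_ge_of_le atTop (x := 1) fun n => ?_) ?_
    · simpa using avgDeg_div_card_sub_one_le_one (SimpleGraph.lollipop n (n - 2 * (n / K)))
    filter_upwards [eventually_ge_atTop 2] with n hn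
    exact (le_sub_comm.1 hK.le).trans (SimpleGraph.one_sub_six_div_le_avgDeg_lollipop hK3 hn)
  · refine tendsto_atTop_mono' atTop ?_
      (tendsto_natCast_atTop_atTop.atTop_div_const (by positivity : (0 : ℝ) < 64 * K ^ 3))
    filter_upwards [eventually_ge_atTop K] with n hn
    exact SimpleGraph.div_le_Hstar_lollipop hK3 hn
end
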